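/- arXiv:2502.02765 — 2 statements merged into one kernel-verified Lean document; each statement's English description precedes it below -/
import Mathlib

section
/- For d ≥ 2, the bilinear spherical maximal function satisfies the pointwise bound M(f,g)(x) + M(g,f)(x) ≤ C · S f(x) · M_HL g(x) for all nonnegative measurable f, g on ℝ^d and all x, where S is the (full) spherical maximal function, M_HL is the Hardy–Littlewood maximal function, and C depends only on d. -/
open MeasureTheory Metric Set
open scoped ENNReal NNReal

noncomputable def sphμ (ι : Type*) [Fintype ι] :
    Measure (sphere (0 : EuclideanSpace ℝ ι) 1) :=
  (((volume : Measure (EuclideanSpace ℝ ι)).toSphere) Set.univ)⁻¹ •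
    (volume : Measure (EuclideanSpace ℝ ι)).toSphere

noncomputable def yPart {d : ℕ} (v : EuclideanSpace ℝ (Fin d ⊕ Fin d)) :
    EuclideanSpace ℝ (Fin d) := WithLp.toLp 2 (fun i => v (Sum.inl i))

noncomputable def zPart {d : ℕ} (v : EuclideanSpace ℝ (Fin d ⊕ Fin d)) :
    EuclideanSpace ℝ (Fin d) := WithLp.toLp 2 (fun i => v (Sum.inr i))

/-- The bilinear spherical average `A_t(f,g)(x)` over the unit sphere of `ℝ^d × ℝ^d`,
with respect to the normalized surface measure. -/
noncomputable def bAvg (d : ℕ) (t : ℝ) (f g : EuclideanSpace ℝ (Fin d) → ℝ)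
    (x : EuclideanSpace ℝ (Fin d)) : ℝ :=
  ∫ u : sphere (0 : EuclideanSpace ℝ (Fin d ⊕ Fin d)) 1,
    f (x - t • yPart (u : EuclideanSpace ℝ (Fin d ⊕ Fin d))) *
      g (x - t • zPart (u : EuclideanSpace ℝ (Fin d ⊕ Fin d))) ∂(sphμ (Fin d ⊕ Fin d))

/-- The linear spherical average `A_t f(x)` over `S^{d-1}` with normalized measure. -/
noncomputable def linAvg (d : ℕ) (t : ℝ) (f : EuclideanSpace ℝ (Fin d) → ℝ)
    (x : EuclideanSpace ℝ (Fin d)) : ℝ :=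
  ∫ ω : sphere (0 : EuclideanSpace ℝ (Fin d)) 1,
    f (x - t • (ω : EuclideanSpace ℝ (Fin d))) ∂(sphμ (Fin d))

/-- The bilinear spherical maximal function. -/
noncomputable def bMax (d : ℕ) (f g : EuclideanSpace ℝ (Fin d) → ℝ)
    (x : EuclideanSpace ℝ (Fin d)) : ℝ≥0∞ :=
  ⨆ (t : ℝ) (_ : 0 < t), (‖bAvg d t f g x‖₊ : ℝ≥0∞)

/-- The `L^r` quasinorm (with `r ∈ (0,∞]`) of an `ℝ≥0∞`-valued function. -/
noncomputable def eLpENN {α : Type*} [MeasurableSpace α] (μ : Measure α) (r : ℝ≥0∞)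
    (F : α → ℝ≥0∞) : ℝ≥0∞ :=
  if r = 0 then 0 else if r = ∞ then essSup F μ
  else (∫⁻ x, F x ^ r.toReal ∂μ) ^ (1 / r.toReal)

/-- The spherical maximal function. -/
noncomputable def sphMax (d : ℕ) (f : EuclideanSpace ℝ (Fin d) → ℝ)
    (x : EuclideanSpace ℝ (Fin d)) : ℝ≥0∞ :=
  ⨆ (t : ℝ) (_ : 0 < t), (‖linAvg d t f x‖₊ : ℝ≥0∞)

/-- The Hardy–Littlewood maximal function. -/
noncomputable def hlMax (d : ℕ) (g : EuclideanSpace ℝ (Fin d) → ℝ)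
    (x : EuclideanSpace ℝ (Fin d)) : ℝ≥0∞ :=
  ⨆ (r : ℝ) (_ : 0 < r),
    (∫⁻ y in Metric.ball x r, (‖g y‖₊ : ℝ≥0∞)) / volume (Metric.ball x r)

namespace JL

/-! ### generic polar coordinates -/

noncomputable def w : ℝ → ℝ≥0∞ := (Ioo (1:ℝ) 2).indicator (fun _ => 1)

lemma w_meas : Measurable w := measurable_one.indicator measurableSet_Ioo

noncomputable def cpol (n : ℕ) : ℝ≥0∞ :=
  ∫⁻ r in Ioi (0:ℝ), ENNReal.ofReal (r ^ (n-1)) * w r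

lemma cpol_eq (n : ℕ) :
    cpol n = ∫⁻ r in Ioo (1:ℝ) 2, ENNReal.ofReal (r ^ (n-1)) := by
  unfold cpol
  have : ∀ r : ℝ, ENNReal.ofReal (r ^ (n-1)) * w r
      = (Ioo (1:ℝ) 2).indicator (fun r => ENNReal.ofReal (r ^ (n-1))) r := by
    intro r
    unfold w
    by_cases h : r ∈ Ioo (1:ℝ) 2 <;> simp [h]
  simp only [this]
  rw [lintegral_indicator measurableSet_Ioo, Measure.restrict_restrict measurableSet_Ioo]
  have : Ioo (1:ℝ) 2 ∩ Ioi 0 = Ioo 1 2 := inter_eq_left.2 fun r hr => lt_trans one_pos hr.1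
  rw [show (Ioo (1:ℝ) 2 ∩ Ioi 0 : Set ℝ) = Ioo 1 2 from this]

lemma cpol_pos (n : ℕ) : 1 ≤ cpol n := by
  rw [cpol_eq]
  calc (1:ℝ≥0∞) = ∫⁻ _ in Ioo (1:ℝ) 2, 1 := by
        rw [setLIntegral_one, Real.volume_Ioo]; norm_num
    _ ≤ _ := by
        refine setLIntegral_mono' measurableSet_Ioo fun r hr => ?_
        rw [show (1:ℝ≥0∞) = ENNReal.ofReal 1 by simp]
        exact ENNReal.ofReal_le_ofReal (one_le_pow₀ hr.1.le)

lemma cpol_ne_zero (n : ℕ) : cpol n ≠ 0 := (lt_of_lt_of_le one_pos (cpol_pos n)).ne'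

lemma cpol_lt_top (n : ℕ) : cpol n < ∞ := by
  rw [cpol_eq]
  calc ∫⁻ r in Ioo (1:ℝ) 2, ENNReal.ofReal (r ^ (n-1))
      ≤ ∫⁻ _ in Ioo (1:ℝ) 2, ENNReal.ofReal (2 ^ (n-1)) := by
        refine setLIntegral_mono' measurableSet_Ioo fun r hr => ?_
        exact ENNReal.ofReal_le_ofReal (pow_le_pow_left₀ (le_trans one_pos.le hr.1.le) hr.2.le _)
    _ < ∞ := by
        rw [setLIntegral_const, Real.volume_Ioo]
        exact ENNReal.mul_lt_top ENNReal.ofReal_lt_top ENNReal.ofReal_lt_top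

section Polar

variable {ι : Type*} [Fintype ι] [Nonempty ι]

local notation "E" => EuclideanSpace ℝ ι

lemma lintegral_polar (h : EuclideanSpace ℝ ι → ℝ≥0∞) (hh : Measurable h) :
    ∫⁻ v, h v = ∫⁻ ω : sphere (0 : E) 1,
      ∫⁻ r in Ioi (0:ℝ), ENNReal.ofReal (r ^ (Fintype.card ι - 1)) *
        h (r • (ω : E)) ∂volume
      ∂((volume : Measure E).toSphere) := by
  have hdim : Module.finrank ℝ E = Fintype.card ι := finrank_euclideanSpace
  simp only [← hdim]
  set m := Module.finrank ℝ E - 1 with hm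
  set g : sphere (0:E) 1 × Ioi (0:ℝ) → ℝ≥0∞ := fun p => h (p.2.1 • p.1.1) with hg
  have hgm : Measurable g :=
    hh.comp ((continuous_subtype_val.comp continuous_snd).smul
      (continuous_subtype_val.comp continuous_fst)).measurable
  have key := (Measure.measurePreserving_homeomorphUnitSphereProd
      (volume : Measure E)).lintegral_comp hgm
  have h0 : ∀ x : ({0}ᶜ : Set E), h x.1 = g (homeomorphUnitSphereProd E x) := by
    rintro ⟨x, hx⟩
    have hx0 : x ≠ 0 := hx
    simp only [hg, homeomorphUnitSphereProd_apply_snd_coe, homeomorphUnitSphereProd_apply_fst_coe]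
    rw [smul_inv_smul₀ (norm_ne_zero_iff.2 hx0)]
  have hdens : Measurable fun r : Ioi (0:ℝ) => ENNReal.ofReal (r.1 ^ m) :=
    (measurable_subtype_coe.pow_const _).ennreal_ofReal
  calc ∫⁻ v, h v = ∫⁻ v in ({0}ᶜ : Set E), h v := by
        rw [restrict_compl_singleton]
    _ = ∫⁻ x : ({0}ᶜ : Set E), h x.1 ∂((volume : Measure E).comap Subtype.val) := by
        rw [lintegral_subtype_comap (measurableSet_singleton (0:E)).compl]
    _ = ∫⁻ p, g p ∂(((volume : Measure E).toSphere).prod (Measure.volumeIoiPow m)) := by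
        rw [← key]; exact lintegral_congr h0
    _ = ∫⁻ ω : sphere (0:E) 1, ∫⁻ r : Ioi (0:ℝ), g (ω, r)
          ∂(Measure.volumeIoiPow m) ∂(volume : Measure E).toSphere := by
        exact lintegral_prod g hgm.aemeasurable
    _ = _ := by
        refine lintegral_congr fun ω => ?_
        have hω : Measurable fun r : Ioi (0:ℝ) => g (ω, r) := hgm.comp measurable_prodMk_left
        have e1 : ∫⁻ r : Ioi (0:ℝ), g (ω, r) ∂(Measure.volumeIoiPow m)
            = ∫⁻ r : Ioi (0:ℝ), ENNReal.ofReal (r.1 ^ m) * g (ω, r)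
              ∂(Measure.comap Subtype.val volume) :=
          lintegral_withDensity_eq_lintegral_mul _ hdens hω
        have e2 : ∫⁻ r : Ioi (0:ℝ), ENNReal.ofReal (r.1 ^ m) * g (ω, r)
              ∂(Measure.comap Subtype.val volume)
            = ∫⁻ r in Ioi (0:ℝ), ENNReal.ofReal (r ^ m) * h (r • (ω : E)) ∂volume :=
          lintegral_subtype_comap measurableSet_Ioi
            (fun r : ℝ => ENNReal.ofReal (r ^ m) * h (r • (ω : E)))
        exact e1.trans e2

lemma sphere_lintegral_eq (H : EuclideanSpace ℝ ι → ℝ≥0∞) (hH : Measurable H) :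
    ∫⁻ u : sphere (0:E) 1, H u.1 ∂((volume : Measure E).toSphere)
      = (cpol (Fintype.card ι))⁻¹ * ∫⁻ v, w ‖v‖ * H (‖v‖⁻¹ • v) ∂volume := by
  set m := Fintype.card ι - 1 with hm
  have hmap : Measurable fun v : E => ‖v‖⁻¹ • v :=
    (measurable_norm.inv.smul measurable_id)
  have hint : Measurable fun v : E => w ‖v‖ * H (‖v‖⁻¹ • v) :=
    ((w_meas.comp measurable_norm).mul (hH.comp hmap))
  rw [lintegral_polar _ hint]
  have inner : ∀ ω : sphere (0:E) 1,
      ∫⁻ r in Ioi (0:ℝ), ENNReal.ofReal (r ^ m) *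
        (w ‖r • (ω:E)‖ * H (‖r • (ω:E)‖⁻¹ • (r • (ω:E)))) ∂volume
      = cpol (Fintype.card ι) * H ω.1 := by
    intro ω
    have hω : ‖(ω:E)‖ = 1 := mem_sphere_zero_iff_norm.1 ω.2
    have step : ∀ r ∈ Ioi (0:ℝ), ENNReal.ofReal (r ^ m) *
        (w ‖r • (ω:E)‖ * H (‖r • (ω:E)‖⁻¹ • (r • (ω:E))))
        = (ENNReal.ofReal (r ^ m) * w r) * H ω.1 := by
      intro r hr
      have hr0 : (0:ℝ) < r := hr
      have hnorm : ‖r • (ω:E)‖ = r := by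
        rw [norm_smul, hω, mul_one, Real.norm_eq_abs, abs_of_pos hr0]
      rw [hnorm, inv_smul_smul₀ hr0.ne', mul_assoc]
    rw [setLIntegral_congr_fun measurableSet_Ioi step]
    rw [lintegral_mul_const _ (show Measurable fun r : ℝ => ENNReal.ofReal (r ^ m) * w r from
      (measurable_id'.pow_const _).ennreal_ofReal.mul w_meas)]
    rfl
  simp only [← hm, inner]
  have hHs : Measurable fun u : sphere (0:E) 1 => H u.1 := hH.comp measurable_subtype_coe
  rw [lintegral_const_mul _ hHs, ← mul_assoc,
    ENNReal.inv_mul_cancel (cpol_ne_zero _) (cpol_lt_top _).ne, one_mul]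

lemma toSphere_univ_pos :
    0 < (volume : Measure E).toSphere univ := by
  rw [Measure.toSphere_apply_univ]
  have h1 : (0:ℝ≥0∞) < Module.finrank ℝ E := by
    have : 0 < Module.finrank ℝ E := Module.finrank_pos
    exact_mod_cast Nat.cast_pos.2 this
  exact ENNReal.mul_pos h1.ne' (measure_ball_pos _ _ one_pos).ne'

lemma toSphere_univ_lt_top :
    (volume : Measure E).toSphere univ < ∞ := measure_lt_top _ _

end Polar

/-! ### one-dimensional change of variables -/

lemma lintegral_image_eq_lintegral_abs_deriv_mul {s : Set ℝ} {f f' : ℝ → ℝ}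
    (hs : MeasurableSet s) (hf' : ∀ x ∈ s, HasDerivWithinAt f (f' x) s x)
    (hf : InjOn f s) (g : ℝ → ℝ≥0∞) :
    ∫⁻ x in f '' s, g x = ∫⁻ x in s, ENNReal.ofReal |f' x| * g (f x) := by
  simpa only [ContinuousLinearMap.det_toSpanSingleton] using
    lintegral_image_eq_lintegral_abs_det_fderiv_mul volume hs
      (fun x hx => (hf' x hx).hasFDerivWithinAt) hf g

lemma one_dim_cov (m : ℕ) (hm : 1 ≤ m) (a : ℝ) (ha : 0 ≤ a) (k : ℝ → ℝ≥0∞) :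
    ∫⁻ s in Ioi (0:ℝ), ENNReal.ofReal (s ^ m) * w (Real.sqrt (s^2+a^2)) *
        k (Real.sqrt (s^2+a^2))
      = ∫⁻ ρ in Ioo (max 1 a) 2,
          ENNReal.ofReal (ρ * Real.sqrt (ρ^2-a^2) ^ (m-1)) * k ρ := by
  set S : Set ℝ := Ioo (max 1 a) 2 with hS
  set φ : ℝ → ℝ := fun ρ => Real.sqrt (ρ^2 - a^2) with hφ
  have hsub : ∀ ρ ∈ S, 0 < ρ^2 - a^2 := by
    rintro ρ ⟨h1, h2⟩
    have haρ : a < ρ := lt_of_le_of_lt (le_max_right 1 a) h1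
    nlinarith [lt_of_le_of_lt (le_max_left 1 a) h1]
  have hφpos : ∀ ρ ∈ S, 0 < φ ρ := fun ρ hρ => Real.sqrt_pos.2 (hsub ρ hρ)
  set T : Set ℝ := {s : ℝ | 0 < s ∧ Real.sqrt (s^2+a^2) ∈ Ioo (1:ℝ) 2} with hTdef
  have hc : Continuous fun s : ℝ => Real.sqrt (s^2+a^2) :=
    Real.continuous_sqrt.comp (by continuity)
  have hTmeas : MeasurableSet T := by
    have : T = Ioi 0 ∩ (fun s : ℝ => Real.sqrt (s^2+a^2)) ⁻¹' (Ioo 1 2) := by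
      ext s; simp [hTdef, mem_Ioi, and_comm]
    rw [this]
    exact measurableSet_Ioi.inter (hc.measurable measurableSet_Ioo)
  set f0 : ℝ → ℝ≥0∞ := fun s => ENNReal.ofReal (s ^ m) * k (Real.sqrt (s^2+a^2)) with hf0
  have himg : φ '' S = {s : ℝ | 0 < s ∧ Real.sqrt (s^2+a^2) ∈ Ioo (1:ℝ) 2} := by
    ext s
    constructor
    · rintro ⟨ρ, hρ, rfl⟩
      obtain ⟨h1, h2⟩ := hρ
      have h1' : 1 < ρ := lt_of_le_of_lt (le_max_left 1 a) h1
      have hρ0 : 0 ≤ ρ := by linarith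
      have hssq : (φ ρ)^2 + a^2 = ρ^2 := by
        rw [hφ, Real.sq_sqrt (hsub ρ ⟨h1, h2⟩).le]; ring
      refine ⟨hφpos ρ ⟨h1, h2⟩, ?_, ?_⟩
      · rw [hssq, Real.sqrt_sq hρ0]; exact h1'
      · rw [hssq, Real.sqrt_sq hρ0]; exact h2
    · rintro ⟨hs0, hs1, hs2⟩
      refine ⟨Real.sqrt (s^2 + a^2), ⟨?_, hs2⟩, ?_⟩
      · refine max_lt hs1 ?_
        calc a = Real.sqrt (a^2) := (Real.sqrt_sq ha).symm
          _ < Real.sqrt (s^2 + a^2) := Real.sqrt_lt_sqrt (sq_nonneg a) (by nlinarith)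
      · show Real.sqrt (Real.sqrt (s^2+a^2)^2 - a^2) = s
        rw [Real.sq_sqrt (by positivity), add_sub_cancel_right, Real.sqrt_sq hs0.le]
  have hSmeas : MeasurableSet S := measurableSet_Ioo
  have hderiv : ∀ ρ ∈ S, HasDerivWithinAt φ (ρ / φ ρ) S ρ := by
    intro ρ hρ
    have h1 : HasDerivAt (fun ρ : ℝ => ρ^2 - a^2) (2*ρ) ρ := by
      simpa using (hasDerivAt_pow 2 ρ).sub_const (a^2)
    have h2 := (Real.hasDerivAt_sqrt (ne_of_gt (hsub ρ hρ))).comp ρ h1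
    have heq : 1 / (2 * Real.sqrt (ρ^2 - a^2)) * (2*ρ) = ρ / φ ρ := by
      rw [hφ]
      have hne : Real.sqrt (ρ^2 - a^2) ≠ 0 := (hφpos ρ hρ).ne'
      field_simp
    rw [← heq]
    exact h2.hasDerivWithinAt
  have hinj : InjOn φ S := by
    intro p hp q hq hpq
    have hp0 : 0 < p := lt_trans one_pos (lt_of_le_of_lt (le_max_left 1 a) hp.1)
    have hq0 : 0 < q := lt_trans one_pos (lt_of_le_of_lt (le_max_left 1 a) hq.1)
    have h2 : p^2 - a^2 = q^2 - a^2 := by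
      have := congrArg (fun r : ℝ => r^2) hpq
      simpa [hφ, Real.sq_sqrt (hsub p hp).le, Real.sq_sqrt (hsub q hq).le] using this
    nlinarith
  have step1 : ∫⁻ s in Ioi (0:ℝ), ENNReal.ofReal (s ^ m) * w (Real.sqrt (s^2+a^2)) *
      k (Real.sqrt (s^2+a^2)) = ∫⁻ s in T, f0 s := by
    have hcong : ∀ s ∈ Ioi (0:ℝ), ENNReal.ofReal (s ^ m) * w (Real.sqrt (s^2+a^2)) *
        k (Real.sqrt (s^2+a^2)) = T.indicator f0 s := by
      intro s hs
      by_cases h : Real.sqrt (s^2+a^2) ∈ Ioo (1:ℝ) 2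
      · have hsT : s ∈ T := ⟨hs, h⟩
        rw [indicator_of_mem hsT, hf0]
        unfold w
        rw [indicator_of_mem h]
        ring
      · have hsT : s ∉ T := fun hc' => h hc'.2
        rw [indicator_of_notMem hsT]
        unfold w
        rw [indicator_of_notMem h]
        simp
    rw [setLIntegral_congr_fun measurableSet_Ioi hcong,
      lintegral_indicator hTmeas, Measure.restrict_restrict hTmeas]
    congr 1
    rw [show (T ∩ Ioi 0 : Set ℝ) = T from inter_eq_left.2 fun s hs => hs.1]
  rw [step1, show T = φ '' S from himg.symm,
    lintegral_image_eq_lintegral_abs_deriv_mul hSmeas hderiv hinj f0]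
  refine setLIntegral_congr_fun hSmeas (fun ρ hρ => ?_)
  have h1' : 1 < ρ := lt_of_le_of_lt (le_max_left 1 a) hρ.1
  have hρ0 : 0 < ρ := lt_trans one_pos h1'
  have hφρ : 0 < φ ρ := hφpos ρ hρ
  have hval : Real.sqrt ((φ ρ)^2 + a^2) = ρ := by
    rw [hφ]
    show Real.sqrt (Real.sqrt (ρ^2 - a^2)^2 + a^2) = ρ
    rw [Real.sq_sqrt (hsub ρ hρ).le, sub_add_cancel, Real.sqrt_sq hρ0.le]
  have habs : |ρ / φ ρ| = ρ / φ ρ := abs_of_pos (div_pos hρ0 hφρ)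
  rw [hf0]
  show ENNReal.ofReal |ρ / φ ρ| * (ENNReal.ofReal ((φ ρ) ^ m) * k (Real.sqrt ((φ ρ)^2 + a^2)))
      = ENNReal.ofReal (ρ * Real.sqrt (ρ^2-a^2) ^ (m-1)) * k ρ
  rw [hval, habs, ← mul_assoc, ← ENNReal.ofReal_mul (div_pos hρ0 hφρ).le]
  congr 2
  have hmm : (φ ρ) ^ m = (φ ρ) ^ (m-1) * (φ ρ) := by
    conv_lhs => rw [show m = (m-1) + 1 from (Nat.succ_pred_eq_of_pos hm).symm]
    rw [pow_succ]
  rw [hmm, hφ]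
  field_simp
  exact mul_div_cancel_left₀ _ (Real.sqrt_pos.2 (hsub ρ hρ)).ne'


section Split

variable {d : ℕ}

local notation "Ed" => EuclideanSpace ℝ (Fin d)
local notation "E2" => EuclideanSpace ℝ (Fin d ⊕ Fin d)

lemma yPart_smul (c : ℝ) (v : E2) : yPart (c • v) = c • yPart v := by ext i; simp [yPart]

lemma zPart_smul (c : ℝ) (v : E2) : zPart (c • v) = c • zPart v := by ext i; simp [zPart]

lemma yPart_meas : Measurable (yPart (d := d)) := by
  unfold yPart; fun_prop

lemma zPart_meas : Measurable (zPart (d := d)) := by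
  unfold zPart; fun_prop

noncomputable def rho {d : ℕ}
    (p : EuclideanSpace ℝ (Fin d) × EuclideanSpace ℝ (Fin d)) : ℝ :=
  Real.sqrt (‖p.1‖^2 + ‖p.2‖^2)

lemma rho_cont : Continuous (rho (d := d)) :=
  Real.continuous_sqrt.comp
    (((continuous_norm.comp continuous_fst).pow 2).add
      ((continuous_norm.comp continuous_snd).pow 2))

lemma rho_meas : Measurable (rho (d := d)) := rho_cont.measurable

lemma norm_split (v : E2) : ‖v‖ = rho (yPart v, zPart v) := by
  unfold rho
  rw [EuclideanSpace.norm_eq v, EuclideanSpace.norm_eq (yPart v),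
    EuclideanSpace.norm_eq (zPart v), Real.sq_sqrt (by positivity),
    Real.sq_sqrt (by positivity), Fintype.sum_sum_type]
  simp only [yPart, zPart]

lemma split_measurePreserving :
    MeasurePreserving (fun v : E2 => ((yPart v, zPart v) : Ed × Ed))
      volume volume := by
  have m1 := EuclideanSpace.volume_preserving_symm_measurableEquiv_toLp (Fin d ⊕ Fin d)
  have m2 := (MeasureTheory.volume_measurePreserving_sumPiEquivProdPi_symm
    (fun _ : Fin d ⊕ Fin d => ℝ)).symm
  have m3 := ((EuclideanSpace.volume_preserving_symm_measurableEquiv_toLp (Fin d)).symm).prod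
    ((EuclideanSpace.volume_preserving_symm_measurableEquiv_toLp (Fin d)).symm)
  have comp := (m3.comp m2).comp m1
  convert comp using 1
  all_goals rfl

/-- transport of the sphere integral to the product of two Euclidean spaces -/
lemma K1 (F G : EuclideanSpace ℝ (Fin d) → ℝ≥0∞) (hF : Measurable F) (hG : Measurable G)
    (hd1 : 1 ≤ d) :
    ∫⁻ u : sphere (0 : E2) 1, F (yPart u.1) * G (zPart u.1)
        ∂((volume : Measure E2).toSphere)
      = (cpol (Fintype.card (Fin d ⊕ Fin d)))⁻¹ *
        ∫⁻ p : Ed × Ed, w (rho p) * (F ((rho p)⁻¹ • p.1) * G ((rho p)⁻¹ • p.2)) := by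
  haveI : Nonempty (Fin d) := ⟨⟨0, hd1⟩⟩
  have hH : Measurable fun v : E2 => F (yPart v) * G (zPart v) :=
    (hF.comp yPart_meas).mul (hG.comp zPart_meas)
  rw [sphere_lintegral_eq _ hH]
  congr 1
  have hΛ : Measurable fun p : Ed × Ed =>
      w (rho p) * (F ((rho p)⁻¹ • p.1) * G ((rho p)⁻¹ • p.2)) := by
    refine ((w_meas.comp rho_meas).mul ?_)
    exact ((hF.comp (rho_meas.inv.smul measurable_fst)).mul
      (hG.comp (rho_meas.inv.smul measurable_snd)))
  rw [← split_measurePreserving.lintegral_comp hΛ]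
  refine lintegral_congr fun v => ?_
  show w ‖v‖ * (F (yPart (‖v‖⁻¹ • v)) * G (zPart (‖v‖⁻¹ • v))) = _
  rw [yPart_smul, zPart_smul, norm_split v]

end Split

section Core

variable {d : ℕ}

local notation "Ed" => EuclideanSpace ℝ (Fin d)
local notation "E2" => EuclideanSpace ℝ (Fin d ⊕ Fin d)

noncomputable def Fo (d : ℕ) (f : EuclideanSpace ℝ (Fin d) → ℝ)
    (x : EuclideanSpace ℝ (Fin d)) (t : ℝ) : EuclideanSpace ℝ (Fin d) → ℝ≥0∞ :=
  fun y => ENNReal.ofReal (f (x - t • y))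

lemma Fo_meas {f : EuclideanSpace ℝ (Fin d) → ℝ} (hf : Measurable f)
    {x : EuclideanSpace ℝ (Fin d)} {t : ℝ} : Measurable (Fo d f x t) :=
  (hf.comp (measurable_const.sub (measurable_id.const_smul t))).ennreal_ofReal

noncomputable def Pint (d : ℕ) (f g : EuclideanSpace ℝ (Fin d) → ℝ)
    (x : EuclideanSpace ℝ (Fin d)) (t : ℝ) : ℝ≥0∞ :=
  ∫⁻ p : EuclideanSpace ℝ (Fin d) × EuclideanSpace ℝ (Fin d),
    w (rho p) * (Fo d f x t ((rho p)⁻¹ • p.1) * Fo d g x t ((rho p)⁻¹ • p.2))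

noncomputable def Iprime (d : ℕ) (f : EuclideanSpace ℝ (Fin d) → ℝ)
    (x : EuclideanSpace ℝ (Fin d)) (t : ℝ) : ℝ → ℝ≥0∞ :=
  fun u => ∫⁻ ω : sphere (0 : EuclideanSpace ℝ (Fin d)) 1,
    Fo d f x t (u • (ω : EuclideanSpace ℝ (Fin d)))
      ∂((volume : Measure (EuclideanSpace ℝ (Fin d))).toSphere)

lemma Iprime_meas {f : EuclideanSpace ℝ (Fin d) → ℝ} (hf : Measurable f)
    {x : EuclideanSpace ℝ (Fin d)} {t : ℝ} : Measurable (Iprime d f x t) := by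
  apply Measurable.lintegral_prod_right'
    (f := fun q : ℝ × sphere (0 : Ed) 1 => Fo d f x t (q.1 • (q.2 : Ed)))
  exact (Fo_meas hf).comp
    (continuous_fst.smul (continuous_subtype_val.comp continuous_snd)).measurable

lemma Iprime_le (hd1 : 1 ≤ d) {f : EuclideanSpace ℝ (Fin d) → ℝ} (hf : Measurable f)
    (hf0 : ∀ y, 0 ≤ f y) (x : EuclideanSpace ℝ (Fin d)) {t : ℝ} (ht : 0 < t)
    {u : ℝ} (hu : 0 < u) (hIu : Iprime d f x t u ≠ ∞) :
    Iprime d f x t u ≤ ((volume : Measure Ed).toSphere univ) * sphMax d f x := by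
  haveI : Nonempty (Fin d) := ⟨⟨0, hd1⟩⟩
  set σu := (volume : Measure Ed).toSphere univ with hσu
  have hσ0 : σu ≠ 0 := toSphere_univ_pos.ne'
  have hσt : σu ≠ ∞ := toSphere_univ_lt_top.ne
  set h : sphere (0 : Ed) 1 → ℝ := fun ω => f (x - (t*u) • (ω : Ed)) with hh
  have hpt : ∀ ω : sphere (0 : Ed) 1, Fo d f x t (u • (ω : Ed))
      = ENNReal.ofReal (h ω) := by
    intro ω
    unfold Fo
    rw [hh, smul_smul]
  have hmh : Measurable h :=
    hf.comp (measurable_const.sub (measurable_subtype_coe.const_smul (t*u)))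
  have heq : ∫⁻ ω, ENNReal.ofReal (h ω) ∂(sphμ (Fin d)) = σu⁻¹ * Iprime d f x t u := by
    rw [show sphμ (Fin d) = σu⁻¹ • (volume : Measure Ed).toSphere from rfl,
      lintegral_smul_measure]
    congr 1
    refine lintegral_congr fun ω => (hpt ω).symm
  have hne : σu⁻¹ * Iprime d f x t u ≠ ∞ :=
    ENNReal.mul_ne_top (ENNReal.inv_ne_top.2 hσ0) hIu
  have hint : Integrable h (sphμ (Fin d)) := by
    refine ⟨hmh.aestronglyMeasurable, ?_⟩
    rw [hasFiniteIntegral_iff_ofReal (Filter.Eventually.of_forall fun ω => hf0 _), heq]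
    exact hne.lt_top
  have hlin : linAvg d (t*u) f x = ∫ ω, h ω ∂(sphμ (Fin d)) := rfl
  have hval : (‖linAvg d (t*u) f x‖₊ : ℝ≥0∞) = σu⁻¹ * Iprime d f x t u := by
    rw [← enorm_eq_nnnorm, Real.enorm_eq_ofReal (by rw [hlin]; exact integral_nonneg fun ω => hf0 _), hlin,
      ofReal_integral_eq_lintegral_ofReal hint (Filter.Eventually.of_forall fun ω => hf0 _),
      heq]
  have hsup : σu⁻¹ * Iprime d f x t u ≤ sphMax d f x := by
    rw [← hval]
    exact le_iSup₂ (f := fun (s : ℝ) (_ : 0 < s) => (‖linAvg d s f x‖₊ : ℝ≥0∞))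
      (t*u) (mul_pos ht hu)
  calc Iprime d f x t u = σu * (σu⁻¹ * Iprime d f x t u) := by
        rw [← mul_assoc, ENNReal.mul_inv_cancel hσ0 hσt, one_mul]
    _ ≤ σu * sphMax d f x := mul_le_mul_right hsup _

lemma smul_lintegral (hd1 : 1 ≤ d) (φ : EuclideanSpace ℝ (Fin d) → ℝ≥0∞)
    (hφ : Measurable φ) {r : ℝ} (hr : r ≠ 0) :
    ∫⁻ z, φ (r • z) = ENNReal.ofReal |(r ^ d)⁻¹| * ∫⁻ z, φ z := by
  have hmap := Measure.map_addHaar_smul (volume : Measure Ed) hr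
  have h1 : ∫⁻ z, φ (r • z) = ∫⁻ z, φ z ∂(Measure.map (r • ·) (volume : Measure Ed)) :=
    (lintegral_map hφ (measurable_const_smul r)).symm
  rw [h1, hmap, lintegral_smul_measure]
  congr 2
  rw [finrank_euclideanSpace, Fintype.card_fin]

lemma ball_translate (hd1 : 1 ≤ d) {g : EuclideanSpace ℝ (Fin d) → ℝ} (hg : Measurable g)
    (hg0 : ∀ y, 0 ≤ g y) (x : EuclideanSpace ℝ (Fin d)) {t : ℝ} (ht : 0 < t) :
    ∫⁻ z in ball (0 : Ed) 1, Fo d g x t z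
      ≤ volume (ball (0 : Ed) 1) * hlMax d g x := by
  haveI : Nonempty (Fin d) := ⟨⟨0, hd1⟩⟩
  set ψ : EuclideanSpace ℝ (Fin d) → ℝ≥0∞ := fun y => ENNReal.ofReal (g y) with hψ
  have hψm : Measurable ψ := hg.ennreal_ofReal
  set φb : EuclideanSpace ℝ (Fin d) → ℝ≥0∞ := (ball x t).indicator ψ with hφb
  have hφbm : Measurable φb := hψm.indicator measurableSet_ball
  have step0 : ∫⁻ z in ball (0 : Ed) 1, Fo d g x t z
      = ∫⁻ z, φb (x + (-t) • z) := by
    rw [← lintegral_indicator measurableSet_ball]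
    refine lintegral_congr fun z => ?_
    have hxz : x + (-t) • z = x - t • z := by
      rw [neg_smul, ← sub_eq_add_neg]
    have hmem : x - t • z ∈ ball x t ↔ z ∈ ball (0 : Ed) 1 := by
      rw [mem_ball, mem_ball, dist_eq_norm, dist_eq_norm, sub_sub_cancel_left, sub_zero,
        norm_neg, norm_smul, Real.norm_eq_abs, abs_of_pos ht]
      constructor
      · intro hlt; nlinarith [norm_nonneg z]
      · intro hlt; nlinarith [norm_nonneg z]
    by_cases hz : z ∈ ball (0 : Ed) 1
    · rw [indicator_of_mem hz, hφb, hxz, indicator_of_mem (hmem.2 hz)]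
      rfl
    · rw [indicator_of_notMem hz, hφb, hxz,
        indicator_of_notMem (fun hc => hz (hmem.1 hc))]
  have step1 : ∫⁻ z, φb (x + (-t) • z)
      = ENNReal.ofReal |((-t) ^ d)⁻¹| * ∫⁻ z, φb (x + z) := by
    exact smul_lintegral hd1 (fun z => φb (x + z))
      (hφbm.comp (measurable_const.add measurable_id)) (neg_ne_zero.2 ht.ne')
  have step2 : ∫⁻ z, φb (x + z) = ∫⁻ z, φb z :=
    (measurePreserving_add_left (volume : Measure Ed) x).lintegral_comp hφbm
  have step3 : ∫⁻ z, φb z = ∫⁻ y in ball x t, ψ y := lintegral_indicator measurableSet_ball ψ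
  have step4 : ∫⁻ y in ball x t, ψ y = ∫⁻ y in ball x t, (‖g y‖₊ : ℝ≥0∞) := by
    refine lintegral_congr fun y => (Real.enorm_eq_ofReal (hg0 y)).symm
  have hv0 : volume (ball x t) ≠ 0 := (measure_ball_pos _ _ ht).ne'
  have hvt : volume (ball x t) ≠ ∞ := measure_ball_lt_top.ne
  have step5 : ∫⁻ y in ball x t, (‖g y‖₊ : ℝ≥0∞) ≤ hlMax d g x * volume (ball x t) := by
    have hdiv : (∫⁻ y in ball x t, (‖g y‖₊ : ℝ≥0∞)) / volume (ball x t) ≤ hlMax d g x :=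
      le_iSup₂ (f := fun (r : ℝ) (_ : 0 < r) =>
        (∫⁻ y in Metric.ball x r, (‖g y‖₊ : ℝ≥0∞)) / volume (Metric.ball x r)) t ht
    calc ∫⁻ y in ball x t, (‖g y‖₊ : ℝ≥0∞)
        = (∫⁻ y in ball x t, (‖g y‖₊ : ℝ≥0∞)) / volume (ball x t) * volume (ball x t) :=
          (ENNReal.div_mul_cancel hv0 hvt).symm
      _ ≤ hlMax d g x * volume (ball x t) := mul_le_mul_left hdiv _
  have hballs : volume (ball x t) = ENNReal.ofReal (t ^ d) * volume (ball (0 : Ed) 1) := by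
    rw [Measure.addHaar_ball volume x ht.le, finrank_euclideanSpace, Fintype.card_fin]
  have habs : |((-t) ^ d)⁻¹| = (t ^ d)⁻¹ := by
    rw [abs_inv, abs_pow, abs_neg, abs_of_pos ht]
  calc ∫⁻ z in ball (0 : Ed) 1, Fo d g x t z
      = ENNReal.ofReal |((-t) ^ d)⁻¹| * ∫⁻ y in ball x t, (‖g y‖₊ : ℝ≥0∞) := by
        rw [step0, step1, step2, step3, step4]
    _ ≤ ENNReal.ofReal ((t ^ d)⁻¹) * (hlMax d g x * (ENNReal.ofReal (t ^ d) *
          volume (ball (0 : Ed) 1))) := by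
        rw [habs]
        exact mul_le_mul_right (le_trans step5 (by rw [hballs])) _
    _ = volume (ball (0 : Ed) 1) * hlMax d g x *
          (ENNReal.ofReal ((t ^ d)⁻¹) * ENNReal.ofReal (t ^ d)) := by ring
    _ = volume (ball (0 : Ed) 1) * hlMax d g x := by
        rw [← ENNReal.ofReal_mul (by positivity), inv_mul_cancel₀ (by positivity),
          ENNReal.ofReal_one, mul_one]

end Core
section Main

variable {d : ℕ}

local notation "Ed" => EuclideanSpace ℝ (Fin d)
local notation "E2" => EuclideanSpace ℝ (Fin d ⊕ Fin d)

lemma rho_swap (p : EuclideanSpace ℝ (Fin d) × EuclideanSpace ℝ (Fin d)) :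
    rho (p.2, p.1) = rho p := by
  unfold rho; rw [add_comm]

lemma K2 (hd : 2 ≤ d) {f g : EuclideanSpace ℝ (Fin d) → ℝ}
    (hf : Measurable f) (hg : Measurable g)
    (hf0 : ∀ y, 0 ≤ f y) (hg0 : ∀ y, 0 ≤ g y) (x : EuclideanSpace ℝ (Fin d)) {t : ℝ}
    (ht : 0 < t) (hfin : Pint d f g x t ≠ ∞) :
    Pint d f g x t ≤ (ENNReal.ofReal (2^(d-1)) *
        ((volume : Measure Ed).toSphere univ) * ENNReal.ofReal (2^d) *
        volume (ball (0:Ed) 1)) * sphMax d f x * hlMax d g x := by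
  have hd1 : 1 ≤ d := le_trans one_le_two hd
  haveI : Nonempty (Fin d) := ⟨⟨0, hd1⟩⟩
  set σu := (volume : Measure Ed).toSphere univ with hσu
  set F := Fo d f x t with hFdef
  set G := Fo d g x t with hGdef
  have hF : Measurable F := Fo_meas hf
  have hG : Measurable G := Fo_meas hg
  set Λ : EuclideanSpace ℝ (Fin d) × EuclideanSpace ℝ (Fin d) → ℝ≥0∞ :=
    fun p => w (rho p) * (F ((rho p)⁻¹ • p.1) * G ((rho p)⁻¹ • p.2)) with hΛdef
  have hΛ : Measurable Λ := by
    refine ((w_meas.comp rho_meas).mul ?_)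
    exact ((hF.comp (rho_meas.inv.smul measurable_fst)).mul
      (hG.comp (rho_meas.inv.smul measurable_snd)))
  -- the joint function after slicing
  set Ξ : EuclideanSpace ℝ (Fin d) × ℝ → ℝ≥0∞ := fun q =>
    ENNReal.ofReal (q.2 * Real.sqrt (q.2^2 - ‖q.1‖^2) ^ (d-1-1)) * G (q.2⁻¹ • q.1) *
      Iprime d f x t (q.2⁻¹ * Real.sqrt (q.2^2 - ‖q.1‖^2)) with hΞdef
  set A : Set (EuclideanSpace ℝ (Fin d) × ℝ) := {q | max 1 ‖q.1‖ < q.2 ∧ q.2 < 2} with hAdef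
  set Θ : EuclideanSpace ℝ (Fin d) × ℝ → ℝ≥0∞ := A.indicator Ξ with hΘdef
  have hsqrtm : Measurable fun q : EuclideanSpace ℝ (Fin d) × ℝ =>
      Real.sqrt (q.2^2 - ‖q.1‖^2) :=
    (Real.continuous_sqrt.measurable).comp
      ((measurable_snd.pow_const 2).sub ((measurable_norm.comp measurable_fst).pow_const 2))
  have hΞm : Measurable Ξ := by
    refine Measurable.mul (Measurable.mul (f := fun q : EuclideanSpace ℝ (Fin d) × ℝ =>
      ENNReal.ofReal (q.2 * Real.sqrt (q.2^2 - ‖q.1‖^2) ^ (d-1-1)))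
      (g := fun q => G (q.2⁻¹ • q.1)) ?_ ?_) ?_
    · exact (measurable_snd.mul (hsqrtm.pow_const _)).ennreal_ofReal
    · exact hG.comp (measurable_snd.inv.smul measurable_fst)
    · exact (Iprime_meas hf).comp (measurable_snd.inv.mul hsqrtm)
  have hAm : MeasurableSet A := by
    have h1 : MeasurableSet {q : EuclideanSpace ℝ (Fin d) × ℝ | max 1 ‖q.1‖ < q.2} :=
      measurableSet_lt (measurable_const.max (measurable_norm.comp measurable_fst))
        measurable_snd
    have h2 : MeasurableSet {q : EuclideanSpace ℝ (Fin d) × ℝ | q.2 < 2} :=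
      measurableSet_lt measurable_snd measurable_const
    exact h1.inter h2
  have hΘm : Measurable Θ := hΞm.indicator hAm
  -- Step B+C+D+E: identify Pint with the integral of Θ
  have key : Pint d f g x t = ∫⁻ q, Θ q ∂((volume : Measure Ed).prod (volume : Measure ℝ)) := by
    have eA : Pint d f g x t = ∫⁻ z, ∫⁻ y, Λ (y, z) := by
      unfold Pint
      rw [← hFdef, ← hGdef, ← hΛdef, show (volume : Measure (EuclideanSpace ℝ (Fin d) ×
        EuclideanSpace ℝ (Fin d))) = (volume : Measure Ed).prod volume from rfl]
      exact lintegral_prod_symm Λ hΛ.aemeasurable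
    have eB : ∀ z : EuclideanSpace ℝ (Fin d), ∫⁻ y, Λ (y, z)
        = ∫⁻ ρ in Ioo (max 1 ‖z‖) 2, Ξ (z, ρ) := by
      intro z
      set a := ‖z‖ with ha
      have ha0 : 0 ≤ a := norm_nonneg z
      have hz : Measurable fun y : EuclideanSpace ℝ (Fin d) => Λ (y, z) :=
        hΛ.comp (measurable_id.prodMk measurable_const)
      rw [lintegral_polar (fun y => Λ (y, z)) hz, Fintype.card_fin]
      -- now inner integral over s, for each ω
      have inner : ∀ ω : sphere (0 : Ed) 1,
          ∫⁻ s in Ioi (0:ℝ), ENNReal.ofReal (s ^ (d-1)) * Λ (s • (ω : Ed), z) ∂volume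
          = ∫⁻ ρ in Ioo (max 1 a) 2,
              ENNReal.ofReal (ρ * Real.sqrt (ρ^2-a^2) ^ (d-1-1)) *
                (F ((ρ⁻¹ * Real.sqrt (ρ^2 - a^2)) • (ω : Ed)) * G (ρ⁻¹ • z)) := by
        intro ω
        set k : ℝ → ℝ≥0∞ := fun ρ =>
          F ((ρ⁻¹ * Real.sqrt (ρ^2 - a^2)) • (ω : Ed)) * G (ρ⁻¹ • z) with hkdef
        have hcong : ∀ s ∈ Ioi (0:ℝ), ENNReal.ofReal (s ^ (d-1)) * Λ (s • (ω : Ed), z)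
            = ENNReal.ofReal (s ^ (d-1)) * w (Real.sqrt (s^2+a^2)) *
              k (Real.sqrt (s^2+a^2)) := by
          intro s hs
          have hs0 : (0:ℝ) < s := hs
          have hω : ‖(ω : Ed)‖ = 1 := mem_sphere_zero_iff_norm.1 ω.2
          have hrho : rho ((s • (ω : Ed), z)) = Real.sqrt (s^2+a^2) := by
            unfold rho
            simp only
            rw [norm_smul, hω, mul_one, Real.norm_eq_abs, sq_abs]
          have hss : Real.sqrt (Real.sqrt (s^2+a^2)^2 - a^2) = s := by
            rw [Real.sq_sqrt (by positivity), add_sub_cancel_right, Real.sqrt_sq hs0.le]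
          rw [hΛdef]
          simp only
          rw [hrho, hkdef]
          simp only
          rw [hss, smul_smul, mul_assoc]
        rw [setLIntegral_congr_fun measurableSet_Ioi hcong,
          one_dim_cov (d-1) (by omega) a ha0 k]
      rw [lintegral_congr inner]
      -- swap ω and ρ
      have hswap := lintegral_lintegral_swap
        (μ := (volume : Measure Ed).toSphere) (ν := (volume : Measure ℝ).restrict (Ioo (max 1 a) 2))
        (f := fun (ω : sphere (0 : Ed) 1) (ρ : ℝ) =>
          ENNReal.ofReal (ρ * Real.sqrt (ρ^2-a^2) ^ (d-1-1)) *
            (F ((ρ⁻¹ * Real.sqrt (ρ^2 - a^2)) • (ω : Ed)) * G (ρ⁻¹ • z)))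
        (by
          apply Measurable.aemeasurable
          have h1 : Measurable fun q : sphere (0 : Ed) 1 × ℝ =>
              ENNReal.ofReal (q.2 * Real.sqrt (q.2^2-a^2) ^ (d-1-1)) :=
            (measurable_snd.mul (((Real.continuous_sqrt.measurable).comp
              ((measurable_snd.pow_const 2).sub measurable_const)).pow_const _)).ennreal_ofReal
          have h2 : Measurable fun q : sphere (0 : Ed) 1 × ℝ =>
              F ((q.2⁻¹ * Real.sqrt (q.2^2 - a^2)) • (q.1 : Ed)) := by
            apply hF.comp
            exact (measurable_snd.inv.mul ((Real.continuous_sqrt.measurable).comp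
              ((measurable_snd.pow_const 2).sub measurable_const))).smul
              (measurable_subtype_coe.comp measurable_fst)
          have h3 : Measurable fun q : sphere (0 : Ed) 1 × ℝ => G (q.2⁻¹ • z) :=
            hG.comp (measurable_snd.inv.smul_const z)
          exact h1.mul (h2.mul h3))
      rw [hswap]
      refine setLIntegral_congr_fun measurableSet_Ioo
        (fun ρ hρ => ?_)
      -- pull out the ω-independent factors
      have hmeasF : Measurable fun ω : sphere (0 : Ed) 1 =>
          F ((ρ⁻¹ * Real.sqrt (ρ^2 - a^2)) • (ω : Ed)) :=
        hF.comp ((measurable_const_smul _).comp measurable_subtype_coe)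
      calc ∫⁻ ω : sphere (0 : Ed) 1,
            ENNReal.ofReal (ρ * Real.sqrt (ρ^2-a^2) ^ (d-1-1)) *
              (F ((ρ⁻¹ * Real.sqrt (ρ^2 - a^2)) • (ω : Ed)) * G (ρ⁻¹ • z))
            ∂((volume : Measure Ed).toSphere)
          = ∫⁻ ω : sphere (0 : Ed) 1,
            (ENNReal.ofReal (ρ * Real.sqrt (ρ^2-a^2) ^ (d-1-1)) * G (ρ⁻¹ • z)) *
              F ((ρ⁻¹ * Real.sqrt (ρ^2 - a^2)) • (ω : Ed))
            ∂((volume : Measure Ed).toSphere) := by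
            refine lintegral_congr fun ω => ?_
            ring
        _ = (ENNReal.ofReal (ρ * Real.sqrt (ρ^2-a^2) ^ (d-1-1)) * G (ρ⁻¹ • z)) *
              Iprime d f x t (ρ⁻¹ * Real.sqrt (ρ^2 - a^2)) := by
            rw [lintegral_const_mul _ hmeasF]
            rfl
        _ = Ξ (z, ρ) := rfl
    have eC : ∀ z : EuclideanSpace ℝ (Fin d),
        ∫⁻ ρ in Ioo (max 1 ‖z‖) 2, Ξ (z, ρ) = ∫⁻ ρ, Θ (z, ρ) := by
      intro z
      rw [← lintegral_indicator measurableSet_Ioo]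
      refine lintegral_congr fun ρ => ?_
      by_cases h : ρ ∈ Ioo (max 1 ‖z‖) 2
      · rw [indicator_of_mem h, hΘdef, indicator_of_mem (show (z,ρ) ∈ A from ⟨h.1, h.2⟩)]
      · rw [indicator_of_notMem h, hΘdef,
          indicator_of_notMem (show (z,ρ) ∉ A from fun hc => h ⟨hc.1, hc.2⟩)]
    calc Pint d f g x t = ∫⁻ z, ∫⁻ y, Λ (y, z) := eA
      _ = ∫⁻ z, ∫⁻ ρ, Θ (z, ρ) := by
          refine lintegral_congr fun z => ?_
          rw [eB z, eC z]
      _ = ∫⁻ q, Θ q ∂((volume : Measure Ed).prod (volume : Measure ℝ)) :=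
          (lintegral_prod Θ hΘm.aemeasurable).symm
  -- a.e. finiteness and pointwise bound
  have hΘfin : ∫⁻ q, Θ q ∂((volume : Measure Ed).prod (volume : Measure ℝ)) ≠ ∞ := by
    rw [← key]; exact hfin
  have hae := ae_lt_top hΘm hΘfin
  set K : ℝ≥0∞ := ENNReal.ofReal (2^(d-1)) * σu * sphMax d f x with hKdef
  set Ψ : EuclideanSpace ℝ (Fin d) × ℝ → ℝ≥0∞ := fun q =>
    (Ioo (1:ℝ) 2).indicator (fun _ => (ball (0:Ed) 1).indicator G (q.2⁻¹ • q.1)) q.2 with hΨdef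
  have hΨm : Measurable Ψ := by
    have hin : Measurable fun q : EuclideanSpace ℝ (Fin d) × ℝ =>
        (ball (0:Ed) 1).indicator G (q.2⁻¹ • q.1) :=
      (hG.indicator measurableSet_ball).comp (measurable_snd.inv.smul measurable_fst)
    have : Ψ = fun q => ({q : EuclideanSpace ℝ (Fin d) × ℝ | q.2 ∈ Ioo (1:ℝ) 2}).indicator
        (fun q => (ball (0:Ed) 1).indicator G (q.2⁻¹ • q.1)) q := by
      funext q
      by_cases h : q.2 ∈ Ioo (1:ℝ) 2
      · rw [hΨdef]; simp only
        rw [indicator_of_mem h, indicator_of_mem (show q ∈ _ from h)]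
      · rw [hΨdef]; simp only
        rw [indicator_of_notMem h, indicator_of_notMem (show q ∉ _ from h)]
    rw [this]
    exact hin.indicator (measurable_snd measurableSet_Ioo)
  have hbound : ∀ᵐ q ∂((volume : Measure Ed).prod (volume : Measure ℝ)), Θ q ≤ K * Ψ q := by
    filter_upwards [hae] with q hq
    by_cases hqA : q ∈ A
    · have h1ρ : 1 < q.2 := lt_of_le_of_lt (le_max_left _ _) hqA.1
      have haρ : ‖q.1‖ < q.2 := lt_of_le_of_lt (le_max_right _ _) hqA.1
      have hρ2 : q.2 < 2 := hqA.2
      have hρ0 : 0 < q.2 := lt_trans one_pos h1ρ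
      have ha0 : 0 ≤ ‖q.1‖ := norm_nonneg _
      have hsub : 0 < q.2^2 - ‖q.1‖^2 := by nlinarith
      set φρ := Real.sqrt (q.2^2 - ‖q.1‖^2) with hφρ
      have hφ0 : 0 < φρ := Real.sqrt_pos.2 hsub
      have hφle : φρ ≤ q.2 := by
        rw [hφρ]
        calc Real.sqrt (q.2^2 - ‖q.1‖^2) ≤ Real.sqrt (q.2^2) :=
              Real.sqrt_le_sqrt (by nlinarith)
          _ = q.2 := Real.sqrt_sq hρ0.le
      have hβ0 : 0 < q.2⁻¹ * φρ := mul_pos (inv_pos.2 hρ0) hφ0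
      have hVle : ENNReal.ofReal (q.2 * φρ ^ (d-1-1)) ≤ ENNReal.ofReal (2^(d-1)) := by
        apply ENNReal.ofReal_le_ofReal
        have h2d : (2:ℝ)^(d-1) = 2 * 2^(d-1-1) := by
          rw [← pow_succ']
          congr 1
          omega
        rw [h2d]
        have hφ2 : φρ ≤ 2 := le_trans hφle hρ2.le
        exact mul_le_mul hρ2.le (pow_le_pow_left₀ hφ0.le hφ2 _) (by positivity) (by norm_num)
      have hmemball : q.2⁻¹ • q.1 ∈ ball (0:Ed) 1 := by
        rw [mem_ball, dist_zero_right, norm_smul, Real.norm_eq_abs,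
          abs_of_pos (inv_pos.2 hρ0)]
        rw [inv_mul_lt_iff₀ hρ0, mul_one]
        exact haρ
      have hΨval : Ψ q = G (q.2⁻¹ • q.1) := by
        rw [hΨdef]
        simp only
        rw [indicator_of_mem (show q.2 ∈ Ioo (1:ℝ) 2 from ⟨h1ρ, hρ2⟩),
          indicator_of_mem hmemball]
      have hΘval : Θ q = ENNReal.ofReal (q.2 * φρ ^ (d-1-1)) * G (q.2⁻¹ • q.1) *
          Iprime d f x t (q.2⁻¹ * φρ) := by
        rw [hΘdef, indicator_of_mem hqA]
      by_cases hI : Iprime d f x t (q.2⁻¹ * φρ) = ∞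
      · by_cases hG0 : G (q.2⁻¹ • q.1) = 0
        · rw [hΘval, hG0]
          simp
        · exfalso
          have hV0 : ENNReal.ofReal (q.2 * φρ ^ (d-1-1)) ≠ 0 :=
            (ENNReal.ofReal_pos.2 (by positivity)).ne'
          have : Θ q = ∞ := by
            rw [hΘval, hI, ENNReal.mul_top (mul_ne_zero hV0 hG0)]
          rw [this] at hq
          exact (lt_irrefl _ hq)
      · have hIle := Iprime_le hd1 hf hf0 x ht hβ0 hI
        rw [hΘval, hΨval, hKdef]
        calc ENNReal.ofReal (q.2 * φρ ^ (d-1-1)) * G (q.2⁻¹ • q.1) *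
              Iprime d f x t (q.2⁻¹ * φρ)
            ≤ ENNReal.ofReal (2^(d-1)) * G (q.2⁻¹ • q.1) * (σu * sphMax d f x) :=
              mul_le_mul' (mul_le_mul' hVle le_rfl) hIle
          _ = ENNReal.ofReal (2^(d-1)) * σu * sphMax d f x * G (q.2⁻¹ • q.1) := by ring
    · rw [hΘdef, indicator_of_notMem hqA]
      exact zero_le
  -- integrate the bound
  have hPsi : ∫⁻ q, Ψ q ∂((volume : Measure Ed).prod (volume : Measure ℝ))
      ≤ ENNReal.ofReal (2^d) * ∫⁻ z in ball (0:Ed) 1, G z := by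
    rw [lintegral_prod_symm Ψ hΨm.aemeasurable]
    set Bg := ∫⁻ z in ball (0:Ed) 1, G z with hBg
    have hinner : ∀ ρ : ℝ, ∫⁻ z, Ψ (z, ρ)
        ≤ (Ioo (1:ℝ) 2).indicator (fun _ => ENNReal.ofReal (2^d) * Bg) ρ := by
      intro ρ
      by_cases hρ : ρ ∈ Ioo (1:ℝ) 2
      · have hρ0 : 0 < ρ := lt_trans one_pos hρ.1
        rw [indicator_of_mem hρ]
        have : ∀ z : EuclideanSpace ℝ (Fin d), Ψ (z, ρ)
            = (ball (0:Ed) 1).indicator G (ρ⁻¹ • z) := by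
          intro z
          rw [hΨdef]
          simp only
          rw [indicator_of_mem hρ]
        rw [lintegral_congr this,
          smul_lintegral hd1 _ (hG.indicator measurableSet_ball) (inv_ne_zero hρ0.ne')]
        rw [lintegral_indicator measurableSet_ball, ← hBg]
        have habs : |((ρ⁻¹) ^ d)⁻¹| = ρ ^ d := by
          rw [← inv_pow, inv_inv, abs_pow, abs_of_pos hρ0]
        rw [habs]
        exact mul_le_mul_left (ENNReal.ofReal_le_ofReal
          (pow_le_pow_left₀ hρ0.le hρ.2.le _)) _
      · rw [indicator_of_notMem hρ]
        have : ∀ z : EuclideanSpace ℝ (Fin d), Ψ (z, ρ) = 0 := by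
          intro z
          rw [hΨdef]
          simp only
          rw [indicator_of_notMem hρ]
        rw [lintegral_congr this, lintegral_zero]
    calc ∫⁻ ρ, ∫⁻ z, Ψ (z, ρ)
        ≤ ∫⁻ ρ, (Ioo (1:ℝ) 2).indicator (fun _ => ENNReal.ofReal (2^d) * Bg) ρ :=
          lintegral_mono hinner
      _ = ENNReal.ofReal (2^d) * Bg := by
          rw [lintegral_indicator measurableSet_Ioo, setLIntegral_const, Real.volume_Ioo]
          norm_num
  have hBgle : ∫⁻ z in ball (0:Ed) 1, G z ≤ volume (ball (0:Ed) 1) * hlMax d g x :=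
    ball_translate hd1 hg hg0 x ht
  calc Pint d f g x t = ∫⁻ q, Θ q ∂((volume : Measure Ed).prod (volume : Measure ℝ)) := key
    _ ≤ ∫⁻ q, K * Ψ q ∂((volume : Measure Ed).prod (volume : Measure ℝ)) :=
        lintegral_mono_ae hbound
    _ = K * ∫⁻ q, Ψ q ∂((volume : Measure Ed).prod (volume : Measure ℝ)) :=
        lintegral_const_mul K hΨm
    _ ≤ K * (ENNReal.ofReal (2^d) * (volume (ball (0:Ed) 1) * hlMax d g x)) := by
        refine mul_le_mul_right (le_trans hPsi ?_) _
        exact mul_le_mul_right hBgle _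
    _ = (ENNReal.ofReal (2^(d-1)) * σu * ENNReal.ofReal (2^d) *
          volume (ball (0:Ed) 1)) * sphMax d f x * hlMax d g x := by
        rw [hKdef]; ring

end Main
section Final

variable {d : ℕ}

local notation "Ed" => EuclideanSpace ℝ (Fin d)
local notation "E2" => EuclideanSpace ℝ (Fin d ⊕ Fin d)

noncomputable def kap (d : ℕ) : ℝ≥0∞ :=
  ENNReal.ofReal (2^(d-1)) *
    ((volume : Measure (EuclideanSpace ℝ (Fin d))).toSphere univ) * ENNReal.ofReal (2^d) *
    volume (ball (0 : EuclideanSpace ℝ (Fin d)) 1)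

noncomputable def C0 (d : ℕ) : ℝ≥0∞ :=
  ((volume : Measure (EuclideanSpace ℝ (Fin d ⊕ Fin d))).toSphere univ)⁻¹ *
    (cpol (Fintype.card (Fin d ⊕ Fin d)))⁻¹ * kap d

lemma C0_ne_top (hd1 : 1 ≤ d) : C0 d ≠ ∞ := by
  haveI : Nonempty (Fin d) := ⟨⟨0, hd1⟩⟩
  unfold C0 kap
  refine ENNReal.mul_ne_top (ENNReal.mul_ne_top ?_ ?_) ?_
  · exact ENNReal.inv_ne_top.2 (toSphere_univ_pos (ι := Fin d ⊕ Fin d)).ne'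
  · exact ENNReal.inv_ne_top.2 (cpol_ne_zero _)
  · refine ENNReal.mul_ne_top (ENNReal.mul_ne_top (ENNReal.mul_ne_top ?_ ?_) ?_) ?_
    · exact ENNReal.ofReal_ne_top
    · exact (toSphere_univ_lt_top (ι := Fin d)).ne
    · exact ENNReal.ofReal_ne_top
    · exact measure_ball_lt_top.ne

lemma Pint_comm {f g : EuclideanSpace ℝ (Fin d) → ℝ} (hf : Measurable f) (hg : Measurable g)
    (x : EuclideanSpace ℝ (Fin d)) (t : ℝ) :
    Pint d g f x t = Pint d f g x t := by
  set F := Fo d f x t with hFdef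
  set G := Fo d g x t with hGdef
  have hF : Measurable F := Fo_meas hf
  have hG : Measurable G := Fo_meas hg
  set Λ : EuclideanSpace ℝ (Fin d) × EuclideanSpace ℝ (Fin d) → ℝ≥0∞ :=
    fun p => w (rho p) * (F ((rho p)⁻¹ • p.1) * G ((rho p)⁻¹ • p.2)) with hΛdef
  have hvol : (volume : Measure (EuclideanSpace ℝ (Fin d) × EuclideanSpace ℝ (Fin d)))
      = (volume : Measure Ed).prod (volume : Measure Ed) := rfl
  have hswap := lintegral_prod_swap (μ := (volume : Measure Ed)) (ν := (volume : Measure Ed)) Λ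
  calc Pint d g f x t
      = ∫⁻ p : EuclideanSpace ℝ (Fin d) × EuclideanSpace ℝ (Fin d), Λ p.swap
          ∂((volume : Measure Ed).prod (volume : Measure Ed)) := by
        unfold Pint
        rw [hvol]
        refine lintegral_congr fun p => ?_
        show w (rho p) * (Fo d g x t ((rho p)⁻¹ • p.1) * Fo d f x t ((rho p)⁻¹ • p.2)) = _
        show _ = w (rho (p.2, p.1)) *
          (F ((rho (p.2, p.1))⁻¹ • p.2) * G ((rho (p.2, p.1))⁻¹ • p.1))
        rw [rho_swap p, ← hFdef, ← hGdef]
        ring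
    _ = ∫⁻ p, Λ p ∂((volume : Measure Ed).prod (volume : Measure Ed)) := hswap
    _ = Pint d f g x t := by
        unfold Pint
        rw [hvol]

lemma bAvg_term_bound (hd : 2 ≤ d) {f g : EuclideanSpace ℝ (Fin d) → ℝ}
    (hf : Measurable f) (hg : Measurable g) (hf0 : ∀ y, 0 ≤ f y) (hg0 : ∀ y, 0 ≤ g y)
    (x : EuclideanSpace ℝ (Fin d)) {t : ℝ} (ht : 0 < t) :
    (‖bAvg d t f g x‖₊ : ℝ≥0∞) ≤ C0 d * sphMax d f x * hlMax d g x := by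
  have hd1 : 1 ≤ d := le_trans one_le_two hd
  haveI : Nonempty (Fin d) := ⟨⟨0, hd1⟩⟩
  set σ2 := (volume : Measure E2).toSphere univ with hσ2
  have hσ2ne0 : σ2 ≠ 0 := (toSphere_univ_pos (ι := Fin d ⊕ Fin d)).ne'
  have hσ2net : σ2 ≠ ∞ := (toSphere_univ_lt_top (ι := Fin d ⊕ Fin d)).ne
  set h : sphere (0 : E2) 1 → ℝ := fun u =>
    f (x - t • yPart (u : E2)) * g (x - t • zPart (u : E2)) with hhdef
  have hmh : Measurable h := by
    refine Measurable.mul ?_ ?_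
    · exact hf.comp (measurable_const.sub ((yPart_meas.comp measurable_subtype_coe).const_smul t))
    · exact hg.comp (measurable_const.sub ((zPart_meas.comp measurable_subtype_coe).const_smul t))
  have hpt : ∀ u : sphere (0 : E2) 1, (‖h u‖₊ : ℝ≥0∞)
      = Fo d f x t (yPart (u : E2)) * Fo d g x t (zPart (u : E2)) := by
    intro u
    rw [hhdef]
    simp only
    rw [← enorm_eq_nnnorm, Real.enorm_eq_ofReal (mul_nonneg (hf0 _) (hg0 _)),
      ENNReal.ofReal_mul (hf0 _)]
    rfl
  have hJ := K1 (Fo d f x t) (Fo d g x t) (Fo_meas hf) (Fo_meas hg) hd1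
  have hlin : ∫⁻ u : sphere (0 : E2) 1, (‖h u‖₊ : ℝ≥0∞) ∂(sphμ (Fin d ⊕ Fin d))
      = σ2⁻¹ * ((cpol (Fintype.card (Fin d ⊕ Fin d)))⁻¹ * Pint d f g x t) := by
    rw [show sphμ (Fin d ⊕ Fin d) = σ2⁻¹ • (volume : Measure E2).toSphere from rfl,
      lintegral_smul_measure]
    congr 1
    rw [lintegral_congr hpt, hJ]
    rfl
  by_cases hP : Pint d f g x t = ∞
  · have htop : ∫⁻ u : sphere (0 : E2) 1, (‖h u‖₊ : ℝ≥0∞) ∂(sphμ (Fin d ⊕ Fin d)) = ∞ := by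
      rw [hlin, hP, ENNReal.mul_top (ENNReal.inv_ne_zero.2 (cpol_lt_top _).ne),
        ENNReal.mul_top (ENNReal.inv_ne_zero.2 hσ2net)]
    have hni : ¬ Integrable h (sphμ (Fin d ⊕ Fin d)) := by
      intro hi
      exact absurd htop hi.2.ne
    have : bAvg d t f g x = 0 := integral_undef hni
    rw [this]
    simp
  · have hK2 := K2 hd hf hg hf0 hg0 x ht hP
    calc (‖bAvg d t f g x‖₊ : ℝ≥0∞)
        ≤ ∫⁻ u : sphere (0 : E2) 1, (‖h u‖₊ : ℝ≥0∞) ∂(sphμ (Fin d ⊕ Fin d)) :=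
          enorm_integral_le_lintegral_enorm _
      _ = σ2⁻¹ * ((cpol (Fintype.card (Fin d ⊕ Fin d)))⁻¹ * Pint d f g x t) := hlin
      _ ≤ σ2⁻¹ * ((cpol (Fintype.card (Fin d ⊕ Fin d)))⁻¹ *
            (kap d * sphMax d f x * hlMax d g x)) := by
          refine mul_le_mul_right (mul_le_mul_right ?_ _) _
          exact hK2
      _ = C0 d * sphMax d f x * hlMax d g x := by
          unfold C0
          ring

lemma bAvg_term_bound_swap (hd : 2 ≤ d) {f g : EuclideanSpace ℝ (Fin d) → ℝ}
    (hf : Measurable f) (hg : Measurable g) (hf0 : ∀ y, 0 ≤ f y) (hg0 : ∀ y, 0 ≤ g y)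
    (x : EuclideanSpace ℝ (Fin d)) {t : ℝ} (ht : 0 < t) :
    (‖bAvg d t g f x‖₊ : ℝ≥0∞) ≤ C0 d * sphMax d f x * hlMax d g x := by
  have hd1 : 1 ≤ d := le_trans one_le_two hd
  haveI : Nonempty (Fin d) := ⟨⟨0, hd1⟩⟩
  set σ2 := (volume : Measure E2).toSphere univ with hσ2
  have hσ2ne0 : σ2 ≠ 0 := (toSphere_univ_pos (ι := Fin d ⊕ Fin d)).ne'
  have hσ2net : σ2 ≠ ∞ := (toSphere_univ_lt_top (ι := Fin d ⊕ Fin d)).ne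
  set h : sphere (0 : E2) 1 → ℝ := fun u =>
    g (x - t • yPart (u : E2)) * f (x - t • zPart (u : E2)) with hhdef
  have hmh : Measurable h := by
    refine Measurable.mul ?_ ?_
    · exact hg.comp (measurable_const.sub ((yPart_meas.comp measurable_subtype_coe).const_smul t))
    · exact hf.comp (measurable_const.sub ((zPart_meas.comp measurable_subtype_coe).const_smul t))
  have hpt : ∀ u : sphere (0 : E2) 1, (‖h u‖₊ : ℝ≥0∞)
      = Fo d g x t (yPart (u : E2)) * Fo d f x t (zPart (u : E2)) := by
    intro u
    rw [hhdef]
    simp only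
    rw [← enorm_eq_nnnorm, Real.enorm_eq_ofReal (mul_nonneg (hg0 _) (hf0 _)),
      ENNReal.ofReal_mul (hg0 _)]
    rfl
  have hJ := K1 (Fo d g x t) (Fo d f x t) (Fo_meas hg) (Fo_meas hf) hd1
  have hlin : ∫⁻ u : sphere (0 : E2) 1, (‖h u‖₊ : ℝ≥0∞) ∂(sphμ (Fin d ⊕ Fin d))
      = σ2⁻¹ * ((cpol (Fintype.card (Fin d ⊕ Fin d)))⁻¹ * Pint d f g x t) := by
    rw [show sphμ (Fin d ⊕ Fin d) = σ2⁻¹ • (volume : Measure E2).toSphere from rfl,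
      lintegral_smul_measure]
    congr 1
    rw [lintegral_congr hpt, hJ, ← Pint_comm hf hg x t]
    rfl
  by_cases hP : Pint d f g x t = ∞
  · have htop : ∫⁻ u : sphere (0 : E2) 1, (‖h u‖₊ : ℝ≥0∞) ∂(sphμ (Fin d ⊕ Fin d)) = ∞ := by
      rw [hlin, hP, ENNReal.mul_top (ENNReal.inv_ne_zero.2 (cpol_lt_top _).ne),
        ENNReal.mul_top (ENNReal.inv_ne_zero.2 hσ2net)]
    have hni : ¬ Integrable h (sphμ (Fin d ⊕ Fin d)) := by
      intro hi
      exact absurd htop hi.2.ne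
    have : bAvg d t g f x = 0 := integral_undef hni
    rw [this]
    simp
  · have hK2 := K2 hd hf hg hf0 hg0 x ht hP
    calc (‖bAvg d t g f x‖₊ : ℝ≥0∞)
        ≤ ∫⁻ u : sphere (0 : E2) 1, (‖h u‖₊ : ℝ≥0∞) ∂(sphμ (Fin d ⊕ Fin d)) :=
          enorm_integral_le_lintegral_enorm _
      _ = σ2⁻¹ * ((cpol (Fintype.card (Fin d ⊕ Fin d)))⁻¹ * Pint d f g x t) := hlin
      _ ≤ σ2⁻¹ * ((cpol (Fintype.card (Fin d ⊕ Fin d)))⁻¹ *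
            (kap d * sphMax d f x * hlMax d g x)) := by
          refine mul_le_mul_right (mul_le_mul_right ?_ _) _
          exact hK2
      _ = C0 d * sphMax d f x * hlMax d g x := by
          unfold C0
          ring

end Final

end JL


/-- Jeong–Lee pointwise bound: M(f,g) + M(g,f) is bounded by C · Sf · M_HL g for d ≥ 2. -/
theorem stmt_2 (d : ℕ) (hd : 2 ≤ d) :
    ∃ C : ℝ≥0, 0 < C ∧
      ∀ (f g : EuclideanSpace ℝ (Fin d) → ℝ), Measurable f → Measurable g →
        (∀ y, 0 ≤ f y) → (∀ y, 0 ≤ g y) →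
        ∀ x, bMax d f g x + bMax d g f x ≤ (C : ℝ≥0∞) * sphMax d f x * hlMax d g x := by
  have hd1 : 1 ≤ d := le_trans one_le_two hd
  refine ⟨(2 * JL.C0 d).toNNReal + 1, ?_, ?_⟩
  · positivity
  · intro f g hf hg hf0 hg0 x
    have hC0 : JL.C0 d ≠ ∞ := JL.C0_ne_top hd1
    have hCle : 2 * JL.C0 d ≤ (((2 * JL.C0 d).toNNReal + 1 : ℝ≥0) : ℝ≥0∞) := by
      rw [ENNReal.coe_add]
      refine le_trans ?_ le_self_add
      rw [ENNReal.coe_toNNReal (by exact ENNReal.mul_ne_top (by norm_num) hC0)]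
    have h1 : bMax d f g x ≤ JL.C0 d * sphMax d f x * hlMax d g x := by
      refine iSup₂_le fun t ht => ?_
      exact JL.bAvg_term_bound hd hf hg hf0 hg0 x ht
    have h2 : bMax d g f x ≤ JL.C0 d * sphMax d f x * hlMax d g x := by
      refine iSup₂_le fun t ht => ?_
      exact JL.bAvg_term_bound_swap hd hf hg hf0 hg0 x ht
    calc bMax d f g x + bMax d g f x
        ≤ JL.C0 d * sphMax d f x * hlMax d g x + JL.C0 d * sphMax d f x * hlMax d g x :=
          add_le_add h1 h2
      _ = 2 * JL.C0 d * (sphMax d f x * hlMax d g x) := by ring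
      _ ≤ (((2 * JL.C0 d).toNNReal + 1 : ℝ≥0) : ℝ≥0∞) * (sphMax d f x * hlMax d g x) :=
          mul_le_mul_left hCle _
      _ = (((2 * JL.C0 d).toNNReal + 1 : ℝ≥0) : ℝ≥0∞) * sphMax d f x * hlMax d g x := by
          ring
end

section
/- For d = 1, if the bilinear spherical maximal function M satisfies ‖M(f,g)‖_{L^r(ℝ)} ≤ C ‖f‖_{L^p(ℝ)} ‖g‖_{L^q(ℝ)} for all Schwartz functions with 1/r = 1/p + 1/q, then necessarily p ≥ 2 and q ≥ 2. -/
open MeasureTheory Metric Set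
open scoped ENNReal NNReal

local notation "E1" => EuclideanSpace ℝ (Fin 1)
local notation "E2" => EuclideanSpace ℝ (Fin 1 ⊕ Fin 1)

/-- A smooth compactly supported function is a Schwartz function. -/
noncomputable def bumpSchwartz (f : ContDiffBump (0 : E1)) :
    SchwartzMap (EuclideanSpace ℝ (Fin 1)) ℝ where
  toFun := f
  smooth' := f.contDiff
  decay' := by
    intro k n
    have hcs : HasCompactSupport (fun x : E1 => ‖x‖ ^ k * ‖iteratedFDeriv ℝ n (⇑f) x‖) :=
      ((f.hasCompactSupport.iteratedFDeriv (𝕜 := ℝ) n).norm).mul_left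
    have hcont : Continuous (fun x : E1 => ‖x‖ ^ k * ‖iteratedFDeriv ℝ n (⇑f) x‖) :=
      (continuous_norm.pow k).mul
        ((f.contDiff (n := ⊤)).continuous_iteratedFDeriv (mod_cast le_top)).norm
    obtain ⟨C, hC⟩ := hcont.bounded_above_of_compact_support hcs
    refine ⟨C, fun x => ?_⟩
    exact (le_abs_self _).trans (hC x)

@[simp] lemma bumpSchwartz_apply (f : ContDiffBump (0 : E1)) (x : E1) :
    bumpSchwartz f x = f x := rfl

lemma normE1 (w : E1) : ‖w‖ = |w 0| := by
  rw [EuclideanSpace.norm_eq]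
  simp [Fin.sum_univ_one, Real.sqrt_sq_eq_abs]

lemma normE2 (j : Fin 1 ⊕ Fin 1) (v : E2) :
    ‖v‖ = Real.sqrt (v j ^ 2 + v j.swap ^ 2) := by
  rw [EuclideanSpace.norm_eq, Fintype.sum_sum_type]
  rcases j with i | i <;> fin_cases i <;>
    simp [Fin.sum_univ_one, Real.norm_eq_abs, sq_abs, add_comm]

lemma cont_coord (j : Fin 1 ⊕ Fin 1) : Continuous fun v : E2 => v j :=
  (continuous_apply j).comp (PiLp.continuous_ofLp 2 _)

lemma cont_yPart : Continuous (yPart (d := 1)) := by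
  exact (PiLp.continuous_toLp 2 _).comp
    (continuous_pi fun i => (continuous_apply (Sum.inl i)).comp (PiLp.continuous_ofLp 2 _))

lemma cont_zPart : Continuous (zPart (d := 1)) := by
  exact (PiLp.continuous_toLp 2 _).comp
    (continuous_pi fun i => (continuous_apply (Sum.inr i)).comp (PiLp.continuous_ofLp 2 _))
open scoped Pointwise

noncomputable def BB : ℝ≥0∞ := (volume : Measure E2).toSphere Set.univ

lemma finrankE2 : Module.finrank ℝ (EuclideanSpace ℝ (Fin 1 ⊕ Fin 1)) = 2 := by
  simp [finrank_euclideanSpace]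

lemma BB_ne_zero : BB ≠ 0 := by
  rw [BB, Measure.toSphere_apply_univ]
  simp only [ne_eq, mul_eq_zero, not_or]
  exact ⟨by rw [finrankE2]; simp, (measure_ball_pos _ _ one_pos).ne'⟩

lemma BB_ne_top : BB ≠ ∞ := measure_ne_top _ _

lemma meas_cap (j : Fin 1 ⊕ Fin 1) (δ : ℝ) :
    MeasurableSet {u : sphere (0 : E2) 1 | 1 - δ / 2 ≤ (u : E2) j} := by
  have : Continuous fun u : sphere (0 : E2) 1 => (u : E2) j :=
    (cont_coord j).comp continuous_subtype_val
  exact measurableSet_le measurable_const this.measurable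

lemma cap_lb (j : Fin 1 ⊕ Fin 1) {δ : ℝ} (hδ0 : 0 < δ) (hδ1 : δ ≤ 1) :
    ENNReal.ofReal (Real.sqrt δ / 4) ≤
      (volume : Measure E2).toSphere {u : sphere (0 : E2) 1 | 1 - δ / 2 ≤ (u : E2) j} := by
  rw [Measure.toSphere_apply' _ (meas_cap j δ)]
  set cap := {u : sphere (0 : E2) 1 | 1 - δ / 2 ≤ (u : E2) j} with hcap
  have hswapne : j.swap ≠ j := by rcases j with i | i <;> simp [Sum.swap]
  obtain ⟨S, hSj, hSk, hSm⟩ : ∃ S : (Fin 1 ⊕ Fin 1) → Set ℝ,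
      S j = Ioo (1/2 : ℝ) (3/4) ∧ (∀ i, i ≠ j → S i = Ioo (-(Real.sqrt δ / 2)) (Real.sqrt δ / 2)) ∧
        ∀ i, MeasurableSet (S i) := by
    refine ⟨fun i => if i = j then Ioo (1/2 : ℝ) (3/4)
      else Ioo (-(Real.sqrt δ / 2)) (Real.sqrt δ / 2), by simp, fun i hi => by simp [hi], fun i => ?_⟩
    dsimp only; split <;> exact measurableSet_Ioo
  have hsq : 0 < Real.sqrt δ := Real.sqrt_pos.2 hδ0
  have hvolR : volume (((MeasurableEquiv.toLp 2 ((Fin 1 ⊕ Fin 1) → ℝ)).symm) ⁻¹' (Set.univ.pi S))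
      = ENNReal.ofReal (Real.sqrt δ / 4) := by
    rw [(EuclideanSpace.volume_preserving_symm_measurableEquiv_toLp _).measure_preimage
      ((MeasurableSet.univ_pi hSm).nullMeasurableSet), volume_pi_pi, Fintype.prod_sum_type]
    have key : ∀ a b : Fin 1, (Sum.inl a : Fin 1 ⊕ Fin 1) = j ∨ (Sum.inr b : Fin 1 ⊕ Fin 1) = j →
        volume (S (Sum.inl a)) * volume (S (Sum.inr b)) = ENNReal.ofReal (Real.sqrt δ / 4) := by
      intro a b hab
      have hone : volume (Ioo (1/2 : ℝ) (3/4)) = ENNReal.ofReal (1/4) := by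
        rw [Real.volume_Ioo]; norm_num
      have htwo : volume (Ioo (-(Real.sqrt δ / 2)) (Real.sqrt δ / 2)) =
          ENNReal.ofReal (Real.sqrt δ) := by
        rw [Real.volume_Ioo]; ring_nf
      rcases hab with h | h
      · subst h
        rw [hSj, hSk _ (by simp), hone, htwo, ← ENNReal.ofReal_mul (by norm_num)]
        ring_nf
      · subst h
        rw [hSj, hSk _ (by simp), hone, htwo, ← ENNReal.ofReal_mul (le_of_lt hsq)]
        ring_nf
    rcases j with i | i <;> fin_cases i <;>
      simpa [Fin.prod_univ_one] using key 0 0 (by simp)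
  have hsub : ((MeasurableEquiv.toLp 2 ((Fin 1 ⊕ Fin 1) → ℝ)).symm) ⁻¹' (Set.univ.pi S)
      ⊆ Ioo (0:ℝ) 1 • (Subtype.val '' cap) := by
    intro v hv
    have hvj : v j ∈ Ioo (1/2 : ℝ) (3/4) := by
      have := hv j (mem_univ j); rwa [hSj] at this
    have hvk : v j.swap ∈ Ioo (-(Real.sqrt δ / 2)) (Real.sqrt δ / 2) := by
      have := hv j.swap (mem_univ _); rwa [hSk _ hswapne] at this
    set a := v j with ha
    set b := v j.swap with hb
    have hb2 : b ^ 2 < δ / 4 := by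
      have h1 : |b| < Real.sqrt δ / 2 := abs_lt.2 ⟨hvk.1, hvk.2⟩
      have h3 : |b| ^ 2 < (Real.sqrt δ / 2) ^ 2 := by
        apply sq_lt_sq' _ h1; linarith [abs_nonneg b]
      calc b ^ 2 = |b| ^ 2 := (sq_abs b).symm
        _ < (Real.sqrt δ / 2) ^ 2 := h3
        _ = δ / 4 := by rw [div_pow, Real.sq_sqrt hδ0.le]; norm_num
    have hnorm : ‖v‖ = Real.sqrt (a ^ 2 + b ^ 2) := normE2 j v
    have ha2 : (1:ℝ)/4 ≤ a ^ 2 := by nlinarith [hvj.1]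
    have hn_pos : 0 < ‖v‖ := by
      rw [hnorm]; apply Real.sqrt_pos.2; nlinarith [sq_nonneg b]
    have hn_lt1 : ‖v‖ < 1 := by
      rw [hnorm, show (1:ℝ) = Real.sqrt 1 by simp]
      apply Real.sqrt_lt_sqrt (by positivity)
      nlinarith [hvj.1, hvj.2]
    have hkey : (1 - δ/2) * ‖v‖ ≤ a := by
      have h0 : 0 ≤ 1 - δ/2 := by linarith
      have e1 : (1 - δ/2) * ‖v‖ = Real.sqrt ((1 - δ/2)^2 * (a^2 + b^2)) := by
        rw [hnorm, Real.sqrt_mul (sq_nonneg _), Real.sqrt_sq h0]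
      have hA : (0:ℝ) ≤ (δ - δ^2/4) * (a^2 - 1/4) :=
        mul_nonneg (by nlinarith) (by linarith)
      have hB : (0:ℝ) ≤ (1 - δ + δ^2/4) * (δ/4 - b^2) :=
        mul_nonneg (by nlinarith [sq_nonneg (1 - δ/2)]) (by linarith)
      have hc : (0:ℝ) ≤ δ^2 * (3 - δ) := by nlinarith
      have e2 : (1 - δ/2)^2 * (a^2 + b^2) ≤ a^2 := by nlinarith
      rw [e1]
      calc Real.sqrt ((1 - δ/2)^2 * (a^2 + b^2)) ≤ Real.sqrt (a^2) := Real.sqrt_le_sqrt e2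
        _ = a := Real.sqrt_sq (by linarith [hvj.1])
    have hw : ‖(‖v‖⁻¹ • v : E2)‖ = 1 := by
      rw [norm_smul, norm_inv, norm_norm, inv_mul_cancel₀ hn_pos.ne']
    refine Set.mem_smul.2 ⟨‖v‖, mem_Ioo.2 ⟨hn_pos, hn_lt1⟩, ‖v‖⁻¹ • v,
      ⟨⟨‖v‖⁻¹ • v, ?_⟩, ?_, rfl⟩, smul_inv_smul₀ hn_pos.ne' v⟩
    · simpa [mem_sphere_zero_iff_norm] using hw
    · show 1 - δ / 2 ≤ (‖v‖⁻¹ • v : E2) j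
      have hj' : (‖v‖⁻¹ • v : E2) j = ‖v‖⁻¹ * a := rfl
      rw [hj', ← div_eq_inv_mul]
      exact (le_div_iff₀ hn_pos).2 hkey
  calc ENNReal.ofReal (Real.sqrt δ / 4)
      = volume (((MeasurableEquiv.toLp 2 ((Fin 1 ⊕ Fin 1) → ℝ)).symm) ⁻¹' (Set.univ.pi S)) := hvolR.symm
    _ ≤ volume (Ioo (0:ℝ) 1 • (Subtype.val '' cap)) := measure_mono hsub
    _ ≤ (Module.finrank ℝ (EuclideanSpace ℝ (Fin 1 ⊕ Fin 1))) *
        volume (Ioo (0:ℝ) 1 • (Subtype.val '' cap)) := by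
      apply le_mul_of_one_le_left zero_le
      rw [finrankE2]; exact one_le_two
lemma sphμ_apply (s : Set (sphere (0 : E2) 1)) :
    sphμ (Fin 1 ⊕ Fin 1) s = BB⁻¹ * (volume : Measure E2).toSphere s := by
  rw [sphμ, Measure.smul_apply, smul_eq_mul, BB]

lemma sphμ_prob : IsProbabilityMeasure (sphμ (Fin 1 ⊕ Fin 1)) := by
  constructor
  rw [sphμ_apply, ← BB]
  exact ENNReal.inv_mul_cancel BB_ne_zero BB_ne_top

lemma int_lb (j : Fin 1 ⊕ Fin 1) {δ : ℝ} (hδ0 : 0 < δ) (hδ1 : δ ≤ 1)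
    (H : sphere (0 : E2) 1 → ℝ) (Hc : Continuous H) (H0 : ∀ u, 0 ≤ H u)
    (H1 : ∀ u : sphere (0 : E2) 1, 1 - δ / 2 ≤ (u : E2) j → 1 ≤ H u) :
    BB⁻¹ * ENNReal.ofReal (Real.sqrt δ / 4) ≤
      ENNReal.ofReal (∫ u, H u ∂(sphμ (Fin 1 ⊕ Fin 1))) := by
  have prob := sphμ_prob
  set cap := {u : sphere (0 : E2) 1 | 1 - δ / 2 ≤ (u : E2) j} with hcap
  obtain ⟨C, hC⟩ := Hc.bounded_above_of_compact_support
    ((isClosed_tsupport H).isCompact)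
  have hInt : Integrable H (sphμ (Fin 1 ⊕ Fin 1)) :=
    (integrable_const C).mono' Hc.aestronglyMeasurable (Filter.Eventually.of_forall hC)
  have hIndInt : Integrable (cap.indicator fun _ => (1:ℝ)) (sphμ (Fin 1 ⊕ Fin 1)) :=
    (integrable_const 1).indicator (meas_cap j δ)
  have hmono : ∀ u, cap.indicator (fun _ => (1:ℝ)) u ≤ H u := by
    intro u
    by_cases hu : u ∈ cap
    · rw [indicator_of_mem hu]; exact H1 u hu
    · rw [indicator_of_notMem hu]; exact H0 u
  have hint : (sphμ (Fin 1 ⊕ Fin 1) cap).toReal ≤ ∫ u, H u ∂(sphμ (Fin 1 ⊕ Fin 1)) := by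
    have := integral_mono hIndInt hInt hmono
    rwa [integral_indicator_const (1:ℝ) (meas_cap j δ), smul_eq_mul, mul_one] at this
  calc BB⁻¹ * ENNReal.ofReal (Real.sqrt δ / 4)
      ≤ BB⁻¹ * (volume : Measure E2).toSphere cap :=
        mul_le_mul_right (cap_lb j hδ0 hδ1) _
    _ = sphμ (Fin 1 ⊕ Fin 1) cap := (sphμ_apply cap).symm
    _ = ENNReal.ofReal ((sphμ (Fin 1 ⊕ Fin 1) cap).toReal) :=
        (ENNReal.ofReal_toReal (measure_ne_top _ _)).symm
    _ ≤ ENNReal.ofReal (∫ u, H u ∂(sphμ (Fin 1 ⊕ Fin 1))) := ENNReal.ofReal_le_ofReal hint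

lemma cont_coord1 : Continuous fun x : E1 => x 0 :=
  (continuous_apply (0 : Fin 1)).comp (PiLp.continuous_ofLp 2 _)

lemma meas_S : MeasurableSet {x : E1 | x 0 ∈ Ioo (1:ℝ) 2} :=
  (isOpen_Ioo.preimage cont_coord1).measurableSet

lemma vol_S : volume {x : E1 | x 0 ∈ Ioo (1:ℝ) 2} = 1 := by
  have hset : {x : E1 | x 0 ∈ Ioo (1:ℝ) 2} =
      ((MeasurableEquiv.toLp 2 (Fin 1 → ℝ)).symm) ⁻¹' (Set.univ.pi fun _ : Fin 1 => Ioo (1:ℝ) 2) := by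
    ext x
    constructor
    · intro h i _
      have : i = 0 := Subsingleton.elim _ _
      rw [this]; exact h
    · intro h; exact h 0 (mem_univ _)
  rw [hset, (EuclideanSpace.volume_preserving_symm_measurableEquiv_toLp _).measure_preimage
    ((MeasurableSet.univ_pi fun _ => measurableSet_Ioo).nullMeasurableSet),
    volume_pi_pi, Fin.prod_univ_one, Real.volume_Ioo]
  norm_num

lemma elp_lb {r : ℝ≥0∞} (hr0 : r ≠ 0) (hrtop : r ≠ ∞) (F : E1 → ℝ≥0∞) (c : ℝ≥0∞)
    (hc : ∀ x : E1, x 0 ∈ Ioo (1:ℝ) 2 → c ≤ F x) : c ≤ eLpENN volume r F := by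
  rw [eLpENN, if_neg hr0, if_neg hrtop]
  have hρ : 0 < r.toReal := ENNReal.toReal_pos hr0 hrtop
  have h1 : c ^ r.toReal ≤ ∫⁻ x, F x ^ r.toReal ∂volume := by
    have hle : ∀ x : E1, {x : E1 | x 0 ∈ Ioo (1:ℝ) 2}.indicator
        (fun _ => c ^ r.toReal) x ≤ F x ^ r.toReal := by
      intro x
      by_cases hx : x ∈ {x : E1 | x 0 ∈ Ioo (1:ℝ) 2}
      · rw [indicator_of_mem hx]
        exact ENNReal.rpow_le_rpow (hc x hx) hρ.le
      · rw [indicator_of_notMem hx]; exact zero_le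
    calc c ^ r.toReal = c ^ r.toReal * volume {x : E1 | x 0 ∈ Ioo (1:ℝ) 2} := by
          rw [vol_S, mul_one]
      _ = ∫⁻ x, {x : E1 | x 0 ∈ Ioo (1:ℝ) 2}.indicator (fun _ => c ^ r.toReal) x ∂volume := by
          rw [lintegral_indicator meas_S, setLIntegral_const]
      _ ≤ ∫⁻ x, F x ^ r.toReal ∂volume := lintegral_mono hle
  calc c = (c ^ r.toReal) ^ (1 / r.toReal) := by
        rw [← ENNReal.rpow_mul, mul_one_div, div_self hρ.ne', ENNReal.rpow_one]
    _ ≤ (∫⁻ x, F x ^ r.toReal ∂volume) ^ (1 / r.toReal) :=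
        ENNReal.rpow_le_rpow h1 (by positivity)

lemma lhs_lb (j : Fin 1 ⊕ Fin 1) {δ : ℝ} (hδ0 : 0 < δ) (hδ1 : δ ≤ 1)
    {r : ℝ≥0∞} (hr0 : r ≠ 0) (hrtop : r ≠ ∞) (f g : E1 → ℝ)
    (hfc : Continuous f) (hgc : Continuous g)
    (h0 : ∀ y, 0 ≤ f y) (h0' : ∀ y, 0 ≤ g y)
    (hkey : ∀ x : E1, x 0 ∈ Ioo (1:ℝ) 2 → ∀ u : sphere (0 : E2) 1,
      1 - δ / 2 ≤ (u : E2) j →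
      1 ≤ f (x - (x 0) • yPart (u : E2)) * g (x - (x 0) • zPart (u : E2))) :
    BB⁻¹ * ENNReal.ofReal (Real.sqrt δ / 4) ≤ eLpENN volume r (bMax 1 f g) := by
  apply elp_lb hr0 hrtop
  intro x hx
  have hxpos : (0:ℝ) < x 0 := lt_trans one_pos hx.1
  have h1 : (‖bAvg 1 (x 0) f g x‖₊ : ℝ≥0∞) ≤ bMax 1 f g x :=
    le_iSup₂ (f := fun (t : ℝ) (_ : 0 < t) => (‖bAvg 1 t f g x‖₊ : ℝ≥0∞)) (x 0) hxpos
  refine le_trans (le_trans ?_ (Real.ofReal_le_enorm _)) h1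
  have hHc : Continuous fun u : sphere (0 : E2) 1 =>
      f (x - (x 0) • yPart (u : E2)) * g (x - (x 0) • zPart (u : E2)) := by
    have hy : Continuous fun u : sphere (0 : E2) 1 => x - (x 0) • yPart (u : E2) :=
      continuous_const.sub ((cont_yPart.comp continuous_subtype_val).const_smul (x 0))
    have hz : Continuous fun u : sphere (0 : E2) 1 => x - (x 0) • zPart (u : E2) :=
      continuous_const.sub ((cont_zPart.comp continuous_subtype_val).const_smul (x 0))
    exact (hfc.comp hy).mul (hgc.comp hz)
  exact int_lb j hδ0 hδ1 _ hHc (fun u => mul_nonneg (h0 _) (h0' _)) (hkey x hx)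
lemma coord_sq (u : sphere (0 : E2) 1) (j : Fin 1 ⊕ Fin 1) :
    ((u : E2) j) ^ 2 + ((u : E2) j.swap) ^ 2 = 1 := by
  have h1 : ‖(u : E2)‖ = 1 := mem_sphere_zero_iff_norm.mp u.2
  rw [normE2 j] at h1
  have := Real.sqrt_eq_one.mp h1
  exact this

lemma arg_norm (x : E1) (w : E1) : ‖x - (x 0) • w‖ = |x 0 - x 0 * w 0| := by
  rw [normE1]
  congr 1

lemma key_p {δ : ℝ} (hδ0 : 0 < δ) (hδ1 : δ ≤ 1) (fb gb : ContDiffBump (0 : E1))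
    (hf : fb.rIn = δ) (hg : gb.rIn = 4) :
    ∀ x : E1, x 0 ∈ Ioo (1:ℝ) 2 → ∀ u : sphere (0 : E2) 1,
      1 - δ / 2 ≤ (u : E2) (Sum.inl 0) →
      1 ≤ fb (x - (x 0) • yPart (u : E2)) * gb (x - (x 0) • zPart (u : E2)) := by
  intro x hx u hu
  have hsum := coord_sq u (Sum.inl 0)
  set y0 := (u : E2) (Sum.inl 0) with hy0
  set z0 := (u : E2) (Sum.inr 0) with hz0
  have hsum' : y0 ^ 2 + z0 ^ 2 = 1 := hsum
  have hy1 : y0 ≤ 1 := by nlinarith [sq_nonneg z0, sq_nonneg (y0 - 1)]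
  have hz1 : -1 ≤ z0 ∧ z0 ≤ 1 :=
    ⟨by nlinarith [sq_nonneg y0, sq_nonneg (z0 + 1)], by nlinarith [sq_nonneg y0, sq_nonneg (z0 - 1)]⟩
  have harg1 : ‖x - (x 0) • yPart (u : E2)‖ ≤ fb.rIn := by
    rw [arg_norm, hf]
    have hcoord : yPart (u : E2) 0 = y0 := rfl
    rw [hcoord, abs_le]
    constructor <;> nlinarith [hx.1, hx.2]
  have harg2 : ‖x - (x 0) • zPart (u : E2)‖ ≤ gb.rIn := by
    rw [arg_norm, hg]
    have hcoord : zPart (u : E2) 0 = z0 := rfl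
    rw [hcoord, abs_le]
    constructor <;> nlinarith [hx.1, hx.2, hz1.1, hz1.2]
  rw [fb.one_of_mem_closedBall (mem_closedBall_zero_iff.2 harg1),
    gb.one_of_mem_closedBall (mem_closedBall_zero_iff.2 harg2)]
  norm_num

lemma key_q {δ : ℝ} (hδ0 : 0 < δ) (hδ1 : δ ≤ 1) (fb gb : ContDiffBump (0 : E1))
    (hf : fb.rIn = 4) (hg : gb.rIn = δ) :
    ∀ x : E1, x 0 ∈ Ioo (1:ℝ) 2 → ∀ u : sphere (0 : E2) 1,
      1 - δ / 2 ≤ (u : E2) (Sum.inr 0) →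
      1 ≤ fb (x - (x 0) • yPart (u : E2)) * gb (x - (x 0) • zPart (u : E2)) := by
  intro x hx u hu
  have hsum := coord_sq u (Sum.inr 0)
  set z0 := (u : E2) (Sum.inr 0) with hz0
  set y0 := (u : E2) (Sum.inl 0) with hy0
  have hsum' : z0 ^ 2 + y0 ^ 2 = 1 := hsum
  have hz1 : z0 ≤ 1 := by nlinarith [sq_nonneg y0, sq_nonneg (z0 - 1)]
  have hy1 : -1 ≤ y0 ∧ y0 ≤ 1 :=
    ⟨by nlinarith [sq_nonneg z0, sq_nonneg (y0 + 1)], by nlinarith [sq_nonneg z0, sq_nonneg (y0 - 1)]⟩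
  have harg2 : ‖x - (x 0) • zPart (u : E2)‖ ≤ gb.rIn := by
    rw [arg_norm, hg]
    have hcoord : zPart (u : E2) 0 = z0 := rfl
    rw [hcoord, abs_le]
    constructor <;> nlinarith [hx.1, hx.2]
  have harg1 : ‖x - (x 0) • yPart (u : E2)‖ ≤ fb.rIn := by
    rw [arg_norm, hf]
    have hcoord : yPart (u : E2) 0 = y0 := rfl
    rw [hcoord, abs_le]
    constructor <;> nlinarith [hx.1, hx.2, hy1.1, hy1.2]
  rw [fb.one_of_mem_closedBall (mem_closedBall_zero_iff.2 harg1),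
    gb.one_of_mem_closedBall (mem_closedBall_zero_iff.2 harg2)]
  norm_num

lemma finrankE1 : Module.finrank ℝ (EuclideanSpace ℝ (Fin 1)) = 1 := by
  simp [finrank_euclideanSpace]

lemma narrow_eLpNorm {p : ℝ≥0∞} (hp0 : p ≠ 0) (hptop : p ≠ ∞) {δ : ℝ} (hδ0 : 0 < δ)
    (f : ContDiffBump (0 : E1)) (hfo : f.rOut = 2 * δ) :
    eLpNorm (⇑f) p volume ≤
      (ENNReal.ofReal (2*δ) * volume (ball (0:E1) 1)) ^ ((1:ℝ)/p.toReal) := by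
  have h1 : eLpNorm (⇑f) p volume ≤
      eLpNorm ((closedBall (0:E1) (2*δ)).indicator fun _ => (1:ℝ)) p volume := by
    apply eLpNorm_mono
    intro y
    by_cases hy : y ∈ closedBall (0:E1) (2*δ)
    · rw [indicator_of_mem hy]
      rw [Real.norm_eq_abs, Real.norm_eq_abs, abs_of_nonneg f.nonneg, abs_one]
      exact f.le_one
    · have hns : y ∉ Function.support ⇑f := by
        rw [f.support_eq, hfo]
        exact fun h => hy (ball_subset_closedBall h)
      simp [Function.notMem_support.mp hns, indicator_of_notMem hy]
  refine h1.trans ?_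
  rw [eLpNorm_indicator_const measurableSet_closedBall hp0 hptop,
    Measure.addHaar_closedBall _ _ (by positivity : (0:ℝ) ≤ 2*δ), finrankE1, pow_one]
  simp

lemma bump_eLpNorm_ne_top (q : ℝ≥0∞) (g : ContDiffBump (0 : E1)) :
    eLpNorm (⇑g) q volume ≠ ∞ :=
  (g.continuous.memLp_of_hasCompactSupport g.hasCompactSupport).2.ne

lemma no_small_exponent {s : ℝ≥0∞} (hs1 : 1 ≤ s) (hs2 : s < 2) (K : ℝ≥0∞) (hK : K ≠ ∞)
    (h : ∀ δ : ℝ, 0 < δ → δ ≤ 1 →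
      ENNReal.ofReal (Real.sqrt δ / 4) ≤ K * ENNReal.ofReal ((2*δ) ^ ((1:ℝ)/s.toReal))) :
    False := by
  have hsne : s ≠ ∞ := (hs2.trans_le le_top).ne
  have hst : 1 ≤ s.toReal := by
    have := ENNReal.toReal_mono hsne hs1
    simpa using this
  have hst2 : s.toReal < 2 := by
    have := (ENNReal.toReal_lt_toReal hsne (by norm_num : (2:ℝ≥0∞) ≠ ∞)).2 hs2
    simpa using this
  set st := s.toReal with hstdef
  have hst0 : 0 < st := by linarith
  set γ := 1/st - 1/2 with hγ
  have hγ0 : 0 < γ := by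
    have : (1:ℝ)/2 < 1/st := one_div_lt_one_div_of_lt (by linarith) hst2
    rw [hγ]; linarith
  have hreal : ∀ δ : ℝ, 0 < δ → δ ≤ 1 →
      δ ^ ((1:ℝ)/2) ≤ (4 * K.toReal * 2 ^ ((1:ℝ)/st)) * δ ^ ((1:ℝ)/st) := by
    intro δ h0 h1
    have h2 := ENNReal.toReal_mono (ENNReal.mul_ne_top hK ENNReal.ofReal_ne_top) (h δ h0 h1)
    rw [ENNReal.toReal_ofReal (by positivity), ENNReal.toReal_mul,
      ENNReal.toReal_ofReal (by positivity)] at h2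
    rw [Real.mul_rpow (by norm_num) h0.le] at h2
    rw [← Real.sqrt_eq_rpow]
    nlinarith [h2]
  set D := 4 * K.toReal * 2 ^ ((1:ℝ)/st) with hD
  have hD0 : 0 ≤ D := by
    have : (0:ℝ) ≤ K.toReal := ENNReal.toReal_nonneg
    positivity
  set δ0 := (D+1) ^ (-(1/γ)) with hδ0def
  have hd0 : 0 < δ0 := Real.rpow_pos_of_pos (by linarith) _
  have hd1 : δ0 ≤ 1 :=
    Real.rpow_le_one_of_one_le_of_nonpos (by linarith) (neg_nonpos.2 (by positivity))
  have hmain := hreal δ0 hd0 hd1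
  have hsplit : δ0 ^ ((1:ℝ)/2) = δ0 ^ ((1:ℝ)/st) * δ0 ^ (-γ) := by
    rw [← Real.rpow_add hd0]
    congr 1
    rw [hγ]; ring
  rw [hsplit, mul_comm D _] at hmain
  have hcancel : δ0 ^ (-γ) ≤ D :=
    le_of_mul_le_mul_left hmain (Real.rpow_pos_of_pos hd0 _)
  have hval : δ0 ^ (-γ) = D + 1 := by
    have hexp : (-(1/γ)) * (-γ) = 1 := by field_simp
    rw [hδ0def, ← Real.rpow_mul (by linarith : (0:ℝ) ≤ D + 1), hexp, Real.rpow_one]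
  rw [hval] at hcancel
  linarith

/-- In dimension `d = 1`, any Hölder-scaling Lebesgue bound for the bilinear spherical
maximal function forces `p ≥ 2` and `q ≥ 2`. -/
theorem stmt_5 (p q r : ℝ≥0∞) (hp : 1 ≤ p) (hq : 1 ≤ q)
    (hr : 1 / r = 1 / p + 1 / q) (C : ℝ) (hC : 0 < C)
    (hbdd : ∀ (f g : SchwartzMap (EuclideanSpace ℝ (Fin 1)) ℝ),
      eLpENN volume r (bMax 1 (fun y => f y) (fun y => g y)) ≤
        ENNReal.ofReal C * eLpNorm (fun y => f y) p volume *
          eLpNorm (fun y => g y) q volume) :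
    2 ≤ p ∧ 2 ≤ q := by
  have hrle : 1/r ≤ 2 := by
    rw [hr, one_div, one_div]
    calc p⁻¹ + q⁻¹ ≤ 1 + 1 := add_le_add (ENNReal.inv_le_one.2 hp) (ENNReal.inv_le_one.2 hq)
      _ = 2 := by norm_num
  have hr0 : r ≠ 0 := by
    intro h
    rw [h] at hrle
    simp at hrle
  have hVtop : volume (ball (0:E1) 1) ≠ ∞ := measure_ball_lt_top.ne
  constructor
  · -- p ≥ 2
    by_contra hcon
    rw [not_le] at hcon
    have hp0 : p ≠ 0 := (lt_of_lt_of_le zero_lt_one hp).ne'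
    have hptop : p ≠ ∞ := (hcon.trans_le le_top).ne
    have hrtop : r ≠ ∞ := by
      intro h
      rw [h, ENNReal.div_top] at hr
      have h1 : 1/p = 0 := (add_eq_zero.1 hr.symm).1
      rw [one_div, ENNReal.inv_eq_zero] at h1
      exact hptop h1
    set gb : ContDiffBump (0:E1) := ⟨4, 5, by norm_num, by norm_num⟩ with hgb
    set Kg := eLpNorm (⇑gb) q volume with hKg
    have hKgtop : Kg ≠ ∞ := bump_eLpNorm_ne_top q gb
    set V := volume (ball (0:E1) 1) with hV
    set K : ℝ≥0∞ := BB * (ENNReal.ofReal C * V ^ ((1:ℝ)/p.toReal) * Kg) with hK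
    have hKtop : K ≠ ∞ :=
      ENNReal.mul_ne_top BB_ne_top (ENNReal.mul_ne_top
        (ENNReal.mul_ne_top ENNReal.ofReal_ne_top
          (ENNReal.rpow_ne_top_of_nonneg (by positivity) hVtop)) hKgtop)
    apply no_small_exponent hp hcon K hKtop
    intro δ h0 h1
    set fb : ContDiffBump (0:E1) := ⟨δ, 2*δ, h0, by linarith⟩ with hfb
    have step1 := lhs_lb (Sum.inl 0) h0 h1 hr0 hrtop (⇑fb) (⇑gb) fb.continuous gb.continuous
      (fun y => fb.nonneg) (fun y => gb.nonneg) (key_p h0 h1 fb gb rfl rfl)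
    have step2 : eLpENN volume r (bMax 1 (⇑fb) (⇑gb)) ≤
        ENNReal.ofReal C * eLpNorm (⇑fb) p volume * eLpNorm (⇑gb) q volume :=
      hbdd (bumpSchwartz fb) (bumpSchwartz gb)
    have step3 : eLpNorm (⇑fb) p volume ≤ (ENNReal.ofReal (2*δ) * V) ^ ((1:ℝ)/p.toReal) :=
      narrow_eLpNorm hp0 hptop h0 fb rfl
    have chain : BB⁻¹ * ENNReal.ofReal (Real.sqrt δ / 4) ≤
        ENNReal.ofReal C * ((ENNReal.ofReal (2*δ) * V) ^ ((1:ℝ)/p.toReal)) * Kg :=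
      (step1.trans step2).trans
        (mul_le_mul' (mul_le_mul' (le_refl (ENNReal.ofReal C)) step3) (le_refl Kg))
    calc ENNReal.ofReal (Real.sqrt δ / 4)
        = BB * (BB⁻¹ * ENNReal.ofReal (Real.sqrt δ / 4)) := by
          rw [← mul_assoc, ENNReal.mul_inv_cancel BB_ne_zero BB_ne_top, one_mul]
      _ ≤ BB * (ENNReal.ofReal C * ((ENNReal.ofReal (2*δ) * V) ^ ((1:ℝ)/p.toReal)) * Kg) :=
          mul_le_mul_right chain _
      _ = K * ENNReal.ofReal ((2*δ) ^ ((1:ℝ)/p.toReal)) := by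
          rw [ENNReal.mul_rpow_of_nonneg _ _ (by positivity : (0:ℝ) ≤ 1/p.toReal),
            ENNReal.ofReal_rpow_of_pos (by linarith)]
          ring
  · -- q ≥ 2
    by_contra hcon
    rw [not_le] at hcon
    have hq0 : q ≠ 0 := (lt_of_lt_of_le zero_lt_one hq).ne'
    have hqtop : q ≠ ∞ := (hcon.trans_le le_top).ne
    have hrtop : r ≠ ∞ := by
      intro h
      rw [h, ENNReal.div_top] at hr
      have h1 : 1/q = 0 := (add_eq_zero.1 hr.symm).2
      rw [one_div, ENNReal.inv_eq_zero] at h1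
      exact hqtop h1
    set fbw : ContDiffBump (0:E1) := ⟨4, 5, by norm_num, by norm_num⟩ with hfbw
    set Kf := eLpNorm (⇑fbw) p volume with hKf
    have hKftop : Kf ≠ ∞ := bump_eLpNorm_ne_top p fbw
    set V := volume (ball (0:E1) 1) with hV
    set K : ℝ≥0∞ := BB * (ENNReal.ofReal C * Kf * V ^ ((1:ℝ)/q.toReal)) with hK
    have hKtop : K ≠ ∞ :=
      ENNReal.mul_ne_top BB_ne_top (ENNReal.mul_ne_top
        (ENNReal.mul_ne_top ENNReal.ofReal_ne_top hKftop)
        (ENNReal.rpow_ne_top_of_nonneg (by positivity) hVtop))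
    apply no_small_exponent hq hcon K hKtop
    intro δ h0 h1
    set gbn : ContDiffBump (0:E1) := ⟨δ, 2*δ, h0, by linarith⟩ with hgbn
    have step1 := lhs_lb (Sum.inr 0) h0 h1 hr0 hrtop (⇑fbw) (⇑gbn) fbw.continuous gbn.continuous
      (fun y => fbw.nonneg) (fun y => gbn.nonneg) (key_q h0 h1 fbw gbn rfl rfl)
    have step2 : eLpENN volume r (bMax 1 (⇑fbw) (⇑gbn)) ≤
        ENNReal.ofReal C * eLpNorm (⇑fbw) p volume * eLpNorm (⇑gbn) q volume :=
      hbdd (bumpSchwartz fbw) (bumpSchwartz gbn)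
    have step3 : eLpNorm (⇑gbn) q volume ≤ (ENNReal.ofReal (2*δ) * V) ^ ((1:ℝ)/q.toReal) :=
      narrow_eLpNorm hq0 hqtop h0 gbn rfl
    have chain : BB⁻¹ * ENNReal.ofReal (Real.sqrt δ / 4) ≤
        ENNReal.ofReal C * Kf * ((ENNReal.ofReal (2*δ) * V) ^ ((1:ℝ)/q.toReal)) :=
      (step1.trans step2).trans
        (mul_le_mul' (le_refl (ENNReal.ofReal C * Kf)) step3)
    calc ENNReal.ofReal (Real.sqrt δ / 4)
        = BB * (BB⁻¹ * ENNReal.ofReal (Real.sqrt δ / 4)) := by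
          rw [← mul_assoc, ENNReal.mul_inv_cancel BB_ne_zero BB_ne_top, one_mul]
      _ ≤ BB * (ENNReal.ofReal C * Kf * ((ENNReal.ofReal (2*δ) * V) ^ ((1:ℝ)/q.toReal))) :=
          mul_le_mul_right chain _
      _ = K * ENNReal.ofReal ((2*δ) ^ ((1:ℝ)/q.toReal)) := by
          rw [ENNReal.mul_rpow_of_nonneg _ _ (by positivity : (0:ℝ) ≤ 1/q.toReal),
            ENNReal.ofReal_rpow_of_pos (by linarith)]
          ring
end
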